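/- arXiv:1206.3911 — 8 statements merged into one kernel-verified Lean document; each statement's English description precedes it below -/
import Mathlib

section
/- Let I, J ≥ 2, let k ≥ 2 with k ≤ I and k ≤ J, and let C be a k-cycle in Fin I × Fin J. Then C can be partitioned into two disjoint finsets C₁ and C₂ with C₁ ∪ C₂ = C and card C₁ = card C₂ = k, such that in each of C₁ and C₂ every one of the k row levels occurring in C occurs as first coordinate of exactly one point, and every one of the k column levels occurring in C occurs as second coordinate of exactly one point (i.e., each of C₁, C₂ is an orthogonal array of strength 1 on the occurring levels). -/
/-- A `k`-cycle in the `I × J` design: a set of `2k` points such that exactly `k`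
row levels occur as first coordinates, each in exactly two points, and exactly `k`
column levels occur as second coordinates, each in exactly two points. -/
def IsKCycle {I J : ℕ} (k : ℕ) (C : Finset (Fin I × Fin J)) : Prop :=
  C.card = 2 * k ∧
  (C.image Prod.fst).card = k ∧
  (∀ i ∈ C.image Prod.fst, (C.filter fun p => p.1 = i).card = 2) ∧
  (C.image Prod.snd).card = k ∧
  (∀ j ∈ C.image Prod.snd, (C.filter fun p => p.2 = j).card = 2)

/-- Every `k`-cycle can be partitioned into two disjoint parts of cardinality `k`,
each of which is an orthogonal array of strength 1 on the occurring levels: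
each occurring row level appears as first coordinate of exactly one point of each
part, and likewise for column levels. -/
theorem kCycle_decomposes_into_two_OAs {I J k : ℕ} (hI : 2 ≤ I) (hJ : 2 ≤ J)
    (hk : 2 ≤ k) (hkI : k ≤ I) (hkJ : k ≤ J)
    (C : Finset (Fin I × Fin J)) (hC : IsKCycle k C) :
    ∃ C₁ C₂ : Finset (Fin I × Fin J),
      Disjoint C₁ C₂ ∧ C₁ ∪ C₂ = C ∧ C₁.card = k ∧ C₂.card = k ∧
      (∀ i ∈ C.image Prod.fst, (C₁.filter fun p => p.1 = i).card = 1) ∧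
      (∀ j ∈ C.image Prod.snd, (C₁.filter fun p => p.2 = j).card = 1) ∧
      (∀ i ∈ C.image Prod.fst, (C₂.filter fun p => p.1 = i).card = 1) ∧
      (∀ j ∈ C.image Prod.snd, (C₂.filter fun p => p.2 = j).card = 1) := by
  classical
  obtain ⟨hcard, hR, hrow, hS, hcol⟩ := hC
  set R := C.image Prod.fst with hRdef
  set S := C.image Prod.snd with hSdef
  -- neighborhood function on rows
  set t : ↥R → Finset (Fin J) :=
    fun i => (C.filter fun p => p.1 = (i : Fin I)).image Prod.snd with htdef
  have htsub : ∀ i, t i ⊆ S := by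
    intro i j hj
    simp only [htdef, Finset.mem_image, Finset.mem_filter] at hj
    obtain ⟨p, ⟨hp, _⟩, hpj⟩ := hj
    exact Finset.mem_image.mpr ⟨p, hp, hpj⟩
  -- Hall's condition
  have hdisjrow : ∀ (u : Finset (Fin I)), ∀ a ∈ u, ∀ b ∈ u, a ≠ b →
      Disjoint (C.filter fun p => p.1 = a) (C.filter fun p => p.1 = b) := by
    intro u a _ b _ hab
    refine Finset.disjoint_left.mpr fun p hpa hpb => hab ?_
    rw [← (Finset.mem_filter.mp hpa).2, ← (Finset.mem_filter.mp hpb).2]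
  have hdisjcol : ∀ (u : Finset (Fin J)), ∀ a ∈ u, ∀ b ∈ u, a ≠ b →
      Disjoint (C.filter fun p => p.2 = a) (C.filter fun p => p.2 = b) := by
    intro u a _ b _ hab
    refine Finset.disjoint_left.mpr fun p hpa hpb => hab ?_
    rw [← (Finset.mem_filter.mp hpa).2, ← (Finset.mem_filter.mp hpb).2]
  have hall : ∀ s : Finset ↥R, s.card ≤ (s.biUnion t).card := by
    intro s
    set N := s.biUnion t with hNdef
    have hN : N ⊆ S := Finset.biUnion_subset.mpr fun i _ => htsub i
    have hsum : ∀ i ∈ s.image Subtype.val, (C.filter fun p => p.1 = i).card = 2 := by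
      intro i hi
      obtain ⟨a, _, rfl⟩ := Finset.mem_image.mp hi
      exact hrow _ a.2
    have h1 : ((s.image Subtype.val).biUnion
        (fun i => C.filter fun p => p.1 = i)).card = 2 * s.card := by
      rw [Finset.card_biUnion (hdisjrow _), Finset.sum_congr rfl hsum,
        Finset.sum_const, Finset.card_image_of_injective _ Subtype.val_injective,
        smul_eq_mul, Nat.mul_comm]
    have h2 : ((s.image Subtype.val).biUnion
        (fun i => C.filter fun p => p.1 = i)) ⊆
        N.biUnion (fun j => C.filter fun p => p.2 = j) := by
      intro p hp
      obtain ⟨i, hi, hpmem⟩ := Finset.mem_biUnion.mp hp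
      obtain ⟨a, ha, rfl⟩ := Finset.mem_image.mp hi
      obtain ⟨hpC, hp1⟩ := Finset.mem_filter.mp hpmem
      have hp2 : p.2 ∈ t a := by
        simp only [htdef, Finset.mem_image]
        exact ⟨p, Finset.mem_filter.mpr ⟨hpC, hp1⟩, rfl⟩
      exact Finset.mem_biUnion.mpr ⟨p.2, Finset.mem_biUnion.mpr ⟨a, ha, hp2⟩,
        Finset.mem_filter.mpr ⟨hpC, rfl⟩⟩
    have h3 : (N.biUnion (fun j => C.filter fun p => p.2 = j)).card = 2 * N.card := by
      rw [Finset.card_biUnion (hdisjcol _),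
        Finset.sum_congr rfl (fun j hj => hcol j (hN hj)), Finset.sum_const,
        smul_eq_mul, Nat.mul_comm]
    have := (h1 ▸ Finset.card_le_card h2).trans_eq h3
    omega
  obtain ⟨f, hfinj, hft⟩ := (Finset.all_card_le_biUnion_card_iff_exists_injective t).mp hall
  -- the matching C₁
  have hmemC : ∀ i : ↥R, ((i : Fin I), f i) ∈ C := by
    intro i
    have := hft i
    simp only [htdef, Finset.mem_image, Finset.mem_filter] at this
    obtain ⟨p, ⟨hpC, hp1⟩, hp2⟩ := this
    have : p = ((i : Fin I), f i) := Prod.ext hp1 hp2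
    exact this ▸ hpC
  set g : ↥R → Fin I × Fin J := fun i => ((i : Fin I), f i) with hgdef
  have hginj : Function.Injective g := by
    intro a b hab
    exact Subtype.ext (congrArg Prod.fst hab)
  set C₁ : Finset (Fin I × Fin J) := Finset.univ.image g with hC₁def
  have hC₁sub : C₁ ⊆ C := by
    intro p hp
    obtain ⟨a, _, rfl⟩ := Finset.mem_image.mp hp
    exact hmemC a
  have hcardR : Fintype.card ↥R = k := by
    rw [Fintype.card_coe]; exact hR
  have hC₁card : C₁.card = k := by
    rw [hC₁def, Finset.card_image_of_injective _ hginj, Finset.card_univ, hcardR]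
  -- f is a bijection onto S
  have hfS : Finset.univ.image f = S := by
    apply Finset.eq_of_subset_of_card_le
    · intro j hj
      obtain ⟨a, _, rfl⟩ := Finset.mem_image.mp hj
      exact htsub a (hft a)
    · rw [Finset.card_image_of_injective _ hfinj, Finset.card_univ, hcardR, hS]
  -- row fibers of C₁
  have hrow1 : ∀ i ∈ R, (C₁.filter fun p => p.1 = i).card = 1 := by
    intro i hi
    rw [Finset.card_eq_one]
    refine ⟨g ⟨i, hi⟩, ?_⟩
    ext p
    simp only [Finset.mem_filter, Finset.mem_singleton, hC₁def, Finset.mem_image,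
      Finset.mem_univ, true_and]
    constructor
    · rintro ⟨⟨a, rfl⟩, h1⟩
      have : a = ⟨i, hi⟩ := Subtype.ext h1
      rw [this]
    · rintro rfl
      exact ⟨⟨⟨i, hi⟩, rfl⟩, rfl⟩
  -- column fibers of C₁
  have hcol1 : ∀ j ∈ S, (C₁.filter fun p => p.2 = j).card = 1 := by
    intro j hj
    rw [← hfS] at hj
    obtain ⟨a, _, rfl⟩ := Finset.mem_image.mp hj
    rw [Finset.card_eq_one]
    refine ⟨g a, ?_⟩
    ext p
    simp only [Finset.mem_filter, Finset.mem_singleton, hC₁def, Finset.mem_image,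
      Finset.mem_univ, true_and]
    constructor
    · rintro ⟨⟨b, rfl⟩, h2⟩
      have : b = a := hfinj h2
      rw [this]
    · rintro rfl
      exact ⟨⟨a, rfl⟩, rfl⟩
  -- C₂ and the split of fiber counts
  set C₂ : Finset (Fin I × Fin J) := C \ C₁ with hC₂def
  have hdisj : Disjoint C₁ C₂ := Finset.disjoint_sdiff
  have hunion : C₁ ∪ C₂ = C := Finset.union_sdiff_of_subset hC₁sub
  have hC₂card : C₂.card = k := by
    rw [hC₂def, Finset.card_sdiff_of_subset hC₁sub, hcard, hC₁card]
    omega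
  have hsplit : ∀ P : Fin I × Fin J → Prop, ∀ _ : DecidablePred P,
      (C.filter P).card = (C₁.filter P).card + (C₂.filter P).card := by
    intro P _
    rw [← hunion, Finset.filter_union, Finset.card_union_of_disjoint
      (Finset.disjoint_filter_filter hdisj)]
  refine ⟨C₁, C₂, hdisj, hunion, hC₁card, hC₂card, hrow1, hcol1, ?_, ?_⟩
  · intro i hi
    have h2 := hrow i hi
    have h1 := hrow1 i hi
    have := hsplit (fun p => p.1 = i) inferInstance
    omega
  · intro j hj
    have h2 := hcol j hj
    have h1 := hcol1 j hj
    have := hsplit (fun p => p.2 = j) inferInstance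
    omega
end

section
/- Let I, J ≥ 2 and let F be a finset of Fin I × Fin J. If there exist k ≥ 2 and a subset C ⊆ F that is a k-cycle, then the family of model rows {r(p) : p ∈ F} is linearly dependent over ℝ (equivalently, the model matrix X_F does not have full row rank). -/
/-- The model row of a design point `(i, j)` under the simple effect model:
a `1` (for the grand mean), the indicators of the first `I - 1` row levels,
and the indicators of the first `J - 1` column levels. -/
def modelRow {I J : ℕ} (p : Fin I × Fin J) :
    ℝ × (Fin (I - 1) → ℝ) × (Fin (J - 1) → ℝ) :=
  (1,
   fun a => if (p.1 : ℕ) = (a : ℕ) then 1 else 0,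
   fun b => if (p.2 : ℕ) = (b : ℕ) then 1 else 0)

/-!
A model row splits as `r(i, j) = u i + w j`. Fixing a row level `i₀` of a finset `C`,
every `u i + w j = (u i - u i₀) + (w j + u i₀)` with `(i, j) ∈ C` lies in the span of at most
`#rows(C) - 1 + #cols(C)` vectors. A `k`-cycle has `2k` points but only `k` rows and `k` columns,
so its `2k` model rows lie in a space spanned by `2k - 1` vectors.
-/

open Finset

theorem not_linearIndependent_add_of_card_image_add_card_image_le
    {R V α β : Type*} [Ring R] [StrongRankCondition R] [AddCommGroup V] [Module R V]
    [DecidableEq α] [DecidableEq β]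
    (u : α → V) (w : β → V) {C : Finset (α × β)} (hC : C.Nonempty)
    (hcard : #(C.image Prod.fst) + #(C.image Prod.snd) ≤ #C) :
    ¬ LinearIndependent R (fun p : C => u p.1.1 + w p.1.2) := by
  classical
  intro hli
  obtain ⟨i₀, hi₀⟩ := hC.image Prod.fst
  set G := ((C.image Prod.fst).erase i₀).image (fun i => u i - u i₀) ∪
    (C.image Prod.snd).image (fun j => w j + u i₀)
  have hspan : Set.range (fun p : C => u p.1.1 + w p.1.2) ⊆ Submodule.span R (G : Set V) := by
    rintro - ⟨⟨⟨i, j⟩, hp⟩, rfl⟩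
    have hj : w j + u i₀ ∈ Submodule.span R (G : Set V) :=
      Submodule.subset_span (mem_union_right _ (mem_image_of_mem _ (mem_image_of_mem Prod.snd hp)))
    have hi : u i - u i₀ ∈ Submodule.span R (G : Set V) := by
      by_cases h : i = i₀
      · simp [h]
      · exact Submodule.subset_span (mem_union_left _
          (mem_image_of_mem _ (mem_erase.2 ⟨h, mem_image_of_mem Prod.fst hp⟩)))
    simpa only [sub_add_add_cancel, SetLike.mem_coe] using add_mem hi hj
  have hGC : #G < #C := calc
    #G ≤ #((C.image Prod.fst).erase i₀) + #(C.image Prod.snd) :=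
      (card_union_le _ _).trans (add_le_add card_image_le card_image_le)
    _ < #C := by
      rw [card_erase_of_mem hi₀]
      have := card_pos.2 ⟨i₀, hi₀⟩
      omega
  have := linearIndependent_le_span' _ hli (G : Set V) hspan
  simp only [Cardinal.mk_fintype, Fintype.card_coe, SetLike.coe_sort_coe, Nat.cast_le] at this
  omega

theorem exists_modelRow_eq_add (I J : ℕ) :
    ∃ (u : Fin I → ℝ × (Fin (I - 1) → ℝ) × (Fin (J - 1) → ℝ))
      (w : Fin J → ℝ × (Fin (I - 1) → ℝ) × (Fin (J - 1) → ℝ)),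
      ∀ p, modelRow p = u p.1 + w p.2 :=
  ⟨fun i => (1, fun a => if (i : ℕ) = a then 1 else 0, 0),
    fun j => (0, 0, fun b => if (j : ℕ) = b then 1 else 0), fun _ => by simp [modelRow]⟩

theorem IsKCycle.card_image_fst_add_card_image_snd {I J k : ℕ} {C : Finset (Fin I × Fin J)}
    (hC : IsKCycle k C) : #(C.image Prod.fst) + #(C.image Prod.snd) = #C := by
  obtain ⟨hcard, hfst, -, hsnd, -⟩ := hC
  omega

theorem not_linearIndependent_of_contains_cycle_general {I J : ℕ}
    (F : Finset (Fin I × Fin J))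
    (h : ∃ k, 2 ≤ k ∧ ∃ C ⊆ F, IsKCycle k C) :
    ¬ LinearIndependent ℝ (fun p : F => modelRow p.1) := by
  intro hli
  obtain ⟨k, hk, C, hCF, hC⟩ := h
  obtain ⟨u, w, hrow⟩ := exists_modelRow_eq_add I J
  have hne : C.Nonempty := by
    rw [← card_pos, hC.1]
    omega
  have hdep := not_linearIndependent_add_of_card_image_add_card_image_le (R := ℝ) u w hne
    hC.card_image_fst_add_card_image_snd.le
  have hrestrict : LinearIndependent ℝ (fun p : C => modelRow p.1) :=
    hli.comp (fun p : C => ⟨p.1, hCF p.2⟩) fun p q hpq => Subtype.ext (Subtype.mk.inj hpq)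
  exact hdep (by simpa only [hrow] using hrestrict)

/-- If a fraction `F` of the `I × J` design contains a `k`-cycle for some `k ≥ 2`,
then the family of its model rows is linearly dependent over `ℝ`. -/
theorem not_linearIndependent_of_contains_cycle {I J : ℕ} (hI : 2 ≤ I) (hJ : 2 ≤ J)
    (F : Finset (Fin I × Fin J))
    (h : ∃ k, 2 ≤ k ∧ ∃ C ⊆ F, IsKCycle k C) :
    ¬ LinearIndependent ℝ (fun p : F => modelRow p.1) :=
  not_linearIndependent_of_contains_cycle_general F h
end

section
/- Let I ≥ 2 and let F be a saturated fraction of the I × I design (a finset F of Fin I × Fin I with card F = 2I − 1 whose model rows are linearly independent over ℝ). Then every margin of F is positive: m_A(i) ≥ 1 for all i ∈ Fin I and m_B(j) ≥ 1 for all j ∈ Fin I. -/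
open Module

theorem LinearIndependent.exists_apply_ne_zero_of_card_eq_finrank {K V W ι : Type*}
    [DivisionRing K] [AddCommGroup V] [Module K V] [FiniteDimensional K V]
    [AddCommGroup W] [Module K W] [Fintype ι] {v : ι → V} (hv : LinearIndependent K v)
    (hcard : Fintype.card ι = finrank K V) {φ : V →ₗ[K] W} (hφ : φ ≠ 0) :
    ∃ i, φ (v i) ≠ 0 := by
  by_contra! h
  exact hφ <| LinearMap.ext_on_range (hv.span_eq_top_of_card_eq_finrank' hcard) h

theorem Fin.sum_ite_val_eq {M : Type*} [AddCommMonoid M] (m l : ℕ) (c : M) :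
    ∑ a : Fin m, (if l = (a : ℕ) then c else 0) = if l < m then c else 0 := by
  split_ifs with h
  · simp_rw [show ∀ a : Fin m, l = a ↔ ⟨l, h⟩ = a from fun a => by simp [Fin.ext_iff]]
    simp
  · exact Finset.sum_eq_zero fun a _ => if_neg (by omega)

/-- The last level is coded by the zero dummy vector, so its indicator is
`1 - ∑ dummies`; the others are single dummy coordinates. -/
noncomputable def levelIndicator {R : Type*} [CommRing R] {n : ℕ} (k : Fin n) :
    R × (Fin (n - 1) → R) →ₗ[R] R :=
  if h : (k : ℕ) < n - 1 then (LinearMap.proj ⟨k, h⟩).comp (LinearMap.snd R R _)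
  else LinearMap.fst R R _ - ∑ a, (LinearMap.proj a).comp (LinearMap.snd R R _)

theorem levelIndicator_apply {R : Type*} [CommRing R] {n : ℕ} (k l : Fin n) :
    levelIndicator k ((1 : R), fun a => if (l : ℕ) = a then 1 else 0) =
      if l = k then 1 else 0 := by
  unfold levelIndicator
  by_cases hk : (k : ℕ) < n - 1
  · simp [hk, Fin.val_inj]
  · have hkl : l = k ↔ ¬(l : ℕ) < n - 1 := by rw [Fin.ext_iff]; omega
    simp only [hk, dite_false, LinearMap.sub_apply, LinearMap.sum_apply, LinearMap.comp_apply,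
      LinearMap.fst_apply, LinearMap.snd_apply, LinearMap.coe_proj, Function.eval,
      Fin.sum_ite_val_eq, hkl]
    split_ifs <;> simp

theorem one_le_card_filter_of_saturated {I J : ℕ} {F : Finset (Fin I × Fin J)}
    (hcard : F.card = 1 + (I - 1) + (J - 1))
    (hsat : LinearIndependent ℝ (fun p : F => modelRow p.1))
    (P : Fin I × Fin J → Prop) [DecidablePred P] (hP : ∃ p, P p)
    (φ : ℝ × (Fin (I - 1) → ℝ) × (Fin (J - 1) → ℝ) →ₗ[ℝ] ℝ)
    (hφ : ∀ p, φ (modelRow p) = if P p then 1 else 0) :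
    1 ≤ (F.filter P).card := by
  obtain ⟨q, hq⟩ := hP
  have hφ0 : φ ≠ 0 := fun h => by simpa [h, hq] using hφ q
  obtain ⟨⟨p, hpF⟩, hp⟩ :=
    hsat.exists_apply_ne_zero_of_card_eq_finrank (by simp [hcard, add_assoc]) hφ0
  exact Finset.card_pos.2
    ⟨p, Finset.mem_filter.2 ⟨hpF, by_contra fun h => hp (by simp [hφ, h])⟩⟩

theorem margins_pos_of_saturated_general {I : ℕ} (F : Finset (Fin I × Fin I))
    (hcard : F.card = 2 * I - 1)
    (hsat : LinearIndependent ℝ (fun p : F => modelRow p.1)) :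
    (∀ i : Fin I, 1 ≤ (F.filter fun p => p.1 = i).card) ∧
    (∀ j : Fin I, 1 ≤ (F.filter fun p => p.2 = j).card) := by
  have hcard' (k : Fin I) : F.card = 1 + (I - 1) + (I - 1) := by have := k.pos; omega
  refine ⟨fun i => ?_, fun j => ?_⟩
  · exact one_le_card_filter_of_saturated (hcard' i) hsat _ ⟨(i, i), rfl⟩
      ((levelIndicator i).comp ((LinearMap.fst ℝ ℝ _).prod
        ((LinearMap.fst ℝ _ _).comp (LinearMap.snd ℝ ℝ _))))
      fun p => levelIndicator_apply i p.1
  · exact one_le_card_filter_of_saturated (hcard' j) hsat _ ⟨(j, j), rfl⟩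
      ((levelIndicator j).comp ((LinearMap.fst ℝ ℝ _).prod
        ((LinearMap.snd ℝ _ _).comp (LinearMap.snd ℝ ℝ _))))
      fun p => levelIndicator_apply j p.2

/-- Every margin of a saturated fraction of the `I × I` design is positive. -/
theorem margins_pos_of_saturated {I : ℕ} (hI : 2 ≤ I) (F : Finset (Fin I × Fin I))
    (hcard : F.card = 2 * I - 1)
    (hsat : LinearIndependent ℝ (fun p : F => modelRow p.1)) :
    (∀ i : Fin I, 1 ≤ (F.filter fun p => p.1 = i).card) ∧
    (∀ j : Fin I, 1 ≤ (F.filter fun p => p.2 = j).card) :=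
  margins_pos_of_saturated_general F hcard hsat
end

section
/- Let I ≥ 2 and let F be a saturated fraction of the I × I design (a finset F of Fin I × Fin I with card F = 2I − 1 whose model rows are linearly independent over ℝ). Suppose i⋆ ∈ Fin I satisfies m_A(i⋆) = 1, and let (i⋆, j⋆) be the unique point of F whose first coordinate is i⋆. Then m_B(j⋆) ≥ 2. -/
/-!
If the column `j⋆` also had margin `1`, then `(i⋆, j⋆)` would be the only point of `F` in its
row and in its column, so the additive effect `1[i = i⋆] - 1[j = j⋆]` would vanish on `F`.
Additive effects are linear functionals of the model rows, and the model rows of a saturated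
fraction form a basis of the model space, so this effect would vanish on the whole grid; but it
equals `1` at `(i⋆, j)` for any `j ≠ j⋆`.
-/

open Finset

lemma sum_sub_last_mul_indicator {n i : ℕ} (h : ℕ → ℝ) (hi : i ≤ n) :
    ∑ k : Fin n, (h k - h n) * (if i = k then 1 else 0) = h i - h n := by
  rw [Fin.sum_univ_eq_sum_range (fun k => (h k - h n) * if i = k then 1 else 0)]
  simp only [mul_ite, mul_one, mul_zero, sum_ite_eq, mem_range]
  rcases hi.lt_or_eq with hi | rfl
  · rw [if_pos hi]
  · simp

/-- The effects `f`, `g` are indexed by `ℕ` so that the coefficients `f k - f (I - 1)` need no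
`Fin` casts. -/
noncomputable def additiveFunctional (I J : ℕ) (f g : ℕ → ℝ) :
    ℝ × (Fin (I - 1) → ℝ) × (Fin (J - 1) → ℝ) →ₗ[ℝ] ℝ :=
  (f (I - 1) + g (J - 1)) • LinearMap.fst ℝ _ _ +
    ∑ k : Fin (I - 1), (f k - f (I - 1)) • (LinearMap.proj k ∘ₗ LinearMap.fst ℝ _ _ ∘ₗ
      LinearMap.snd ℝ _ _) +
    ∑ k : Fin (J - 1), (g k - g (J - 1)) • (LinearMap.proj k ∘ₗ LinearMap.snd ℝ _ _ ∘ₗ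
      LinearMap.snd ℝ _ _)

lemma additiveFunctional_modelRow {I J : ℕ} (f g : ℕ → ℝ) (p : Fin I × Fin J) :
    additiveFunctional I J f g (modelRow p) = f p.1 + g p.2 := by
  simp only [additiveFunctional, modelRow, LinearMap.add_apply, LinearMap.smul_apply,
    LinearMap.sum_apply, LinearMap.comp_apply, LinearMap.fst_apply,
    LinearMap.snd_apply, LinearMap.proj_apply, smul_eq_mul]
  rw [sum_sub_last_mul_indicator f (by omega), sum_sub_last_mul_indicator g (by omega)]
  ring

theorem additive_eq_zero_of_saturated {I J : ℕ} (F : Finset (Fin I × Fin J))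
    (hcard : F.card = I + J - 1) (hsat : LinearIndependent ℝ (fun p : F => modelRow p.1))
    (f g : ℕ → ℝ) (hF : ∀ p ∈ F, f p.1 + g p.2 = 0) (p : Fin I × Fin J) :
    f p.1 + g p.2 = 0 := by
  have hI : 0 < I := p.1.pos
  have hJ : 0 < J := p.2.pos
  have hfinrank : Fintype.card F =
      Module.finrank ℝ (ℝ × (Fin (I - 1) → ℝ) × (Fin (J - 1) → ℝ)) := by
    simp only [Fintype.card_coe, hcard, Module.finrank_prod, Module.finrank_self,
      Module.finrank_fin_fun]
    omega
  have hzero : additiveFunctional I J f g = 0 :=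
    LinearMap.ext_on_range (hsat.span_eq_top_of_card_eq_finrank' hfinrank) fun q => by
      rw [additiveFunctional_modelRow]
      exact hF q.1 q.2
  rw [← additiveFunctional_modelRow, hzero, LinearMap.zero_apply]

/-- If a row level `i⋆` of a saturated fraction of the `I × I` design has margin `1`,
and `(i⋆, j⋆)` is the unique point of the fraction with first coordinate `i⋆`,
then the column margin of `j⋆` is at least `2`. -/
theorem col_margin_ge_two_of_row_margin_one {I : ℕ} (hI : 2 ≤ I)
    (F : Finset (Fin I × Fin I)) (hcard : F.card = 2 * I - 1)
    (hsat : LinearIndependent ℝ (fun p : F => modelRow p.1))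
    (istar : Fin I) (jstar : Fin I)
    (hrow : (F.filter fun p => p.1 = istar).card = 1)
    (hpt : (istar, jstar) ∈ F) :
    2 ≤ (F.filter fun p => p.2 = jstar).card := by
  by_contra! hcol
  have hrow_eq : ∀ p ∈ F, p.1 = istar → p = (istar, jstar) := fun p hp h =>
    card_le_one.mp hrow.le _ (mem_filter.2 ⟨hp, h⟩) _ (mem_filter.2 ⟨hpt, rfl⟩)
  have hcol_eq : ∀ p ∈ F, p.2 = jstar → p = (istar, jstar) := fun p hp h =>
    card_le_one.mp (Nat.le_of_lt_succ hcol) _ (mem_filter.2 ⟨hp, h⟩) _ (mem_filter.2 ⟨hpt, rfl⟩)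
  let f : ℕ → ℝ := fun n => if n = istar then 1 else 0
  let g : ℕ → ℝ := fun n => if n = jstar then -1 else 0
  have hF : ∀ p ∈ F, f p.1 + g p.2 = 0 := by
    intro p hp
    by_cases h1 : p.1 = istar
    · simp [hrow_eq p hp h1, f, g]
    by_cases h2 : p.2 = jstar
    · exact absurd (by rw [hcol_eq p hp h2]) h1
    simp [f, g, Fin.val_inj, h1, h2]
  have : Nontrivial (Fin I) := Fin.nontrivial_iff_two_le.mpr hI
  obtain ⟨j, hj⟩ := exists_ne jstar
  have hvanish := additive_eq_zero_of_saturated F (by omega) hsat f g hF (istar, j)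
  simp [f, g, Fin.val_inj, hj] at hvanish
end

section
/- Let I ≥ 2, let F_I be a saturated fraction of the I × I design, and regard F_I as a subset F_I' of Fin (I+1) × Fin (I+1) via the embedding (Fin.castSucc, Fin.castSucc) on both coordinates. Let E be a finset of Fin (I+1) × Fin (I+1) disjoint from F_I', and set F_{I+1} = F_I' ∪ E. Then F_{I+1} is a saturated fraction of the (I+1) × (I+1) design if and only if: card E = 2, every point of E has first coordinate equal to the last level (Fin.last) or second coordinate equal to the last level, at least one point of F_{I+1} has first coordinate equal to the last level, and at least one point of F_{I+1} has second coordinate equal to the last level. -/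
/-!
On the model row of a point of the `(m+1) × (n+1)` design, the linear forms
`x ↦ x₀ - ∑ₖ x₁ₖ` and `x ↦ x₀ - ∑ₖ x₂ₖ` are the indicators of the last row and of the last
column. The embedded rows of the saturated `I × I` fraction are independent (dropping the last
level coordinates gives back the original rows), are killed by both forms, and by a dimension
count span their common kernel. So the enlarged family is independent iff the images in `ℝ²` of
the new rows are; these images lie in `{0,1}²`, the count of points forces `card E = 2`, and two
vectors of `{0,1}²` are independent iff they are nonzero and distinct.
-/

open Module Submodule

theorem LinearIndepOn.union_iff_comp_of_ker_eq_span {R M N ι : Type*} [Ring R]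
    [AddCommGroup M] [Module R M] [AddCommGroup N] [Module R N] {s t : Set ι} {f : ι → M}
    (hs : LinearIndepOn R f s) (hst : Disjoint s t) (L : M →ₗ[R] N)
    (hL : LinearMap.ker L = span R (f '' s)) :
    LinearIndepOn R f (s ∪ t) ↔ LinearIndepOn R (L ∘ f) t := by
  rw [← hs.quotient_iff_union hst, ← hL]
  exact ((LinearMap.ker L).liftQ L le_rfl).linearIndependent_iff
    (ker_liftQ_eq_bot _ _ _ le_rfl) |>.symm

theorem linearIndepOn_pair_iff_det {K ι : Type*} [Field K] {v : ι → K × K} {i j : ι}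
    (hij : i ≠ j) :
    LinearIndepOn K v {i, j} ↔ (v i).1 * (v j).2 - (v i).2 * (v j).1 ≠ 0 := by
  rw [LinearIndepOn.pair_iff v hij]
  obtain ⟨a, b⟩ := v i
  obtain ⟨c, d⟩ := v j
  simp only [Prod.smul_mk, Prod.mk_add_mk, smul_eq_mul, Prod.mk_eq_zero]
  constructor
  · intro h hdet
    obtain ⟨-, hb⟩ := h d (-b) ⟨by linear_combination hdet, by ring⟩
    obtain ⟨-, ha⟩ := h (-c) a ⟨by ring, by linear_combination hdet⟩
    simpa [ha, neg_eq_zero.1 hb] using h 1 0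
  · intro hdet s t ⟨h1, h2⟩
    refine ⟨(mul_eq_zero.1 ?_).resolve_right hdet, (mul_eq_zero.1 ?_).resolve_right hdet⟩
    · linear_combination d * h1 - c * h2
    · linear_combination a * h2 - b * h1

theorem linearIndepOn_modelRow_image_castSucc {I J : ℕ} {F : Set (Fin I × Fin J)}
    (hF : LinearIndepOn ℝ modelRow F) :
    LinearIndepOn ℝ modelRow ((fun p => (Fin.castSucc p.1, Fin.castSucc p.2)) '' F) := by
  refine .image_of_comp _ _ (.of_comp (.prodMap .id (.prodMap
    (.funLeft ℝ ℝ (Fin.castLE (by omega : I - 1 ≤ I + 1 - 1)))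
    (.funLeft ℝ ℝ (Fin.castLE (by omega : J - 1 ≤ J + 1 - 1))))) ?_)
  convert hF using 1
  ext p k <;> simp [modelRow]

section LastLevels

def lastLevels (m n : ℕ) : (ℝ × (Fin m → ℝ) × (Fin n → ℝ)) →ₗ[ℝ] ℝ × ℝ where
  toFun x := (x.1 - ∑ k, x.2.1 k, x.1 - ∑ k, x.2.2 k)
  map_add' x y := by
    simp only [Prod.fst_add, Prod.snd_add, Pi.add_apply, Finset.sum_add_distrib, Prod.mk_add_mk]
    ring_nf
  map_smul' c x := by
    simp only [Prod.smul_fst, Prod.smul_snd, Pi.smul_apply, smul_eq_mul, ← Finset.mul_sum,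
      RingHom.id_apply, Prod.smul_mk, mul_sub]

variable {m n : ℕ}

theorem one_sub_sum_ite_val_eq_ite_last (i : Fin (m + 1)) :
    1 - ∑ k : Fin m, (if (i : ℕ) = k then (1 : ℝ) else 0) = if i = Fin.last m then 1 else 0 := by
  have h := Fin.sum_univ_castSucc fun k : Fin (m + 1) => if i = k then (1 : ℝ) else 0
  rw [Finset.sum_ite_eq, if_pos (Finset.mem_univ i)] at h
  simp only [Fin.ext_iff, Fin.val_castSucc] at h ⊢
  linarith

theorem lastLevels_modelRow (p : Fin (m + 1) × Fin (n + 1)) :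
    lastLevels m n (modelRow p) =
      (if p.1 = Fin.last m then 1 else 0, if p.2 = Fin.last n then 1 else 0) := by
  simp only [lastLevels, LinearMap.coe_mk, AddHom.coe_mk, modelRow]
  rw [one_sub_sum_ite_val_eq_ite_last, one_sub_sum_ite_val_eq_ite_last]

theorem lastLevels_surjective (hm : 0 < m) (hn : 0 < n) :
    Function.Surjective (lastLevels m n) := by
  rintro ⟨a, b⟩
  refine ⟨a • modelRow (Fin.last m, 0) + b • modelRow (0, Fin.last n), ?_⟩
  simp [lastLevels_modelRow, Fin.ext_iff, hm.ne, hn.ne]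

theorem finrank_ker_lastLevels (hm : 0 < m) (hn : 0 < n) :
    finrank ℝ (LinearMap.ker (lastLevels m n)) = m + n - 1 := by
  have h := (lastLevels m n).finrank_range_add_finrank_ker
  rw [LinearMap.range_eq_top.2 (lastLevels_surjective hm hn), finrank_top] at h
  simp only [finrank_prod, finrank_self, finrank_fin_fun] at h
  omega

theorem span_modelRow_eq_ker_lastLevels (hm : 0 < m) (hn : 0 < n)
    {F : Finset (Fin (m + 1) × Fin (n + 1))}
    (hF : ∀ p ∈ F, p.1 ≠ Fin.last m ∧ p.2 ≠ Fin.last n)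
    (hli : LinearIndepOn ℝ modelRow (F : Set (Fin (m + 1) × Fin (n + 1))))
    (hcard : F.card = m + n - 1) :
    span ℝ (modelRow '' (F : Set (Fin (m + 1) × Fin (n + 1)))) =
      LinearMap.ker (lastLevels m n) := by
  apply Submodule.eq_of_le_of_finrank_eq
  · rw [span_le]
    rintro _ ⟨p, hp, rfl⟩
    simp [lastLevels_modelRow, hF p hp]
  · rw [Set.image_eq_range, finrank_span_eq_card hli]
    simp only [Finset.coe_sort_coe, Fintype.card_coe, hcard]
    exact (finrank_ker_lastLevels hm hn).symm

theorem linearIndepOn_lastLevels_pair_iff {p q : Fin (m + 1) × Fin (n + 1)} (hpq : p ≠ q) :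
    LinearIndepOn ℝ (lastLevels m n ∘ modelRow) {p, q} ↔
      (p.1 = Fin.last m ∨ p.2 = Fin.last n) ∧ (q.1 = Fin.last m ∨ q.2 = Fin.last n) ∧
      (p.1 = Fin.last m ∨ q.1 = Fin.last m) ∧ (p.2 = Fin.last n ∨ q.2 = Fin.last n) := by
  rw [linearIndepOn_pair_iff_det hpq]
  simp only [Function.comp_apply, lastLevels_modelRow]
  by_cases h1 : p.1 = Fin.last m <;> by_cases h2 : p.2 = Fin.last n <;>
    by_cases h3 : q.1 = Fin.last m <;> by_cases h4 : q.2 = Fin.last n <;>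
    simp [h1, h2, h3, h4]
  exact hpq (Prod.ext (h1.trans h3.symm) (h2.trans h4.symm))

theorem linearIndepOn_lastLevels_iff_of_card_eq_two {E : Finset (Fin (m + 1) × Fin (n + 1))}
    (hE : E.card = 2) :
    LinearIndepOn ℝ (lastLevels m n ∘ modelRow) (E : Set (Fin (m + 1) × Fin (n + 1))) ↔
      (∀ p ∈ E, p.1 = Fin.last m ∨ p.2 = Fin.last n) ∧
      (∃ p ∈ E, p.1 = Fin.last m) ∧ (∃ p ∈ E, p.2 = Fin.last n) := by
  obtain ⟨p, q, hpq, rfl⟩ := Finset.card_eq_two.1 hE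
  rw [Finset.coe_pair, linearIndepOn_lastLevels_pair_iff hpq]
  simp only [Finset.mem_insert, Finset.mem_singleton, forall_eq_or_imp, forall_eq,
    exists_eq_or_imp, exists_eq_left, and_assoc]

end LastLevels

/-- Extension of a saturated `I × I` fraction to the `(I+1) × (I+1)` design: embedding
the fraction via `Fin.castSucc` and adding a finset `E` of new points, the result is a
saturated fraction of the `(I+1) × (I+1)` design if and only if `E` has exactly two
points, each lying in the last row or the last column, and the enlarged fraction meets
both the last row and the last column. -/
theorem saturated_extension_iff {I : ℕ} (hI : 2 ≤ I)
    (FI : Finset (Fin I × Fin I)) (hcard : FI.card = 2 * I - 1)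
    (hsat : LinearIndependent ℝ (fun p : FI => modelRow p.1))
    (FI' E : Finset (Fin (I + 1) × Fin (I + 1)))
    (hFI' : FI' = FI.image (fun p => (Fin.castSucc p.1, Fin.castSucc p.2)))
    (hdisj : Disjoint FI' E) :
    ((FI' ∪ E).card = 2 * (I + 1) - 1 ∧
      LinearIndependent ℝ (fun p : ↥(FI' ∪ E) => modelRow p.1)) ↔
    (E.card = 2 ∧
      (∀ p ∈ E, p.1 = Fin.last I ∨ p.2 = Fin.last I) ∧
      (∃ p ∈ FI' ∪ E, p.1 = Fin.last I) ∧
      (∃ p ∈ FI' ∪ E, p.2 = Fin.last I)) := by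
  have hinner : ∀ p ∈ FI', p.1 ≠ Fin.last I ∧ p.2 ≠ Fin.last I := by
    simp only [hFI', Finset.mem_image]
    rintro _ ⟨q, -, rfl⟩
    exact ⟨(Fin.castSucc_lt_last _).ne, (Fin.castSucc_lt_last _).ne⟩
  have hli : LinearIndepOn ℝ modelRow (FI' : Set (Fin (I + 1) × Fin (I + 1))) := by
    rw [hFI', Finset.coe_image]
    exact linearIndepOn_modelRow_image_castSucc hsat
  have hcard' : FI'.card = I + I - 1 := by
    rw [hFI', Finset.card_image_of_injective _ fun p q h => by simpa [Prod.ext_iff] using h]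
    omega
  have hspan := span_modelRow_eq_ker_lastLevels (by omega) (by omega) hinner hli hcard'
  have exists_mem_union (P : Fin (I + 1) × Fin (I + 1) → Prop) (hP : ∀ p ∈ FI', ¬ P p) :
      (∃ p ∈ FI' ∪ E, P p) ↔ ∃ p ∈ E, P p := by
    grind
  rw [exists_mem_union _ fun p hp => (hinner p hp).1,
    exists_mem_union _ fun p hp => (hinner p hp).2, Finset.card_union_of_disjoint hdisj, hcard']
  change _ ∧ LinearIndepOn ℝ modelRow ((FI' ∪ E : Finset _) : Set (Fin (I + 1) × Fin (I + 1))) ↔ _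
  rw [Finset.coe_union,
    hli.union_iff_comp_of_ker_eq_span (Finset.disjoint_coe.2 hdisj) _ hspan.symm]
  constructor
  · rintro ⟨hc, hindep⟩
    have hE : E.card = 2 := by omega
    exact ⟨hE, (linearIndepOn_lastLevels_iff_of_card_eq_two hE).1 hindep⟩
  · rintro ⟨hE, hlast⟩
    exact ⟨by omega, (linearIndepOn_lastLevels_iff_of_card_eq_two hE).2 hlast⟩
end

section
/- Let I, J ≥ 2. The number of saturated fractions of the I × J design, i.e., finsets F of Fin I × Fin J with card F = I + J − 1 whose model rows are linearly independent over ℝ, equals I^{J−1} · J^{I−1}. -/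
/-!
An invertible change of coordinates turns the model row of `(i, j)` into the column of the
reduced incidence matrix `D` of the complete bipartite graph `K_{I,J}` belonging to the edge
`(i, j)`. So a fraction `F` of size `I + J - 1` is saturated iff the square submatrix `D_F` is
invertible (`F` is a spanning tree). Incidence matrices of directed graphs are totally
unimodular, hence `det (D_F) ^ 2` is `1` on saturated fractions and `0` otherwise, and by
Cauchy–Binet the number of saturated fractions is `det (D * Dᵀ)`. This is the determinant of
the block matrix `[[J • 1, -1], [-1, I • 1]]`, which its Schur complement evaluates to
`I ^ (J - 1) * J ^ (I - 1)`.
-/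

open Matrix Finset Function

section CauchyBinet

variable {R : Type*} [CommRing R] {ι S : Type*} [Fintype ι] [DecidableEq ι]

local notation "ε " σ:max => ((Equiv.Perm.sign σ : ℤ) : R)

theorem Matrix.det_mul_eq_sum_fun [Fintype S] (M : Matrix ι S R) (N : Matrix S ι R) :
    det (M * N) = ∑ p : ι → S, ∑ σ : Equiv.Perm ι, ε σ * ∏ i, M (σ i) (p i) * N (p i) i := by
  simp only [det_apply', mul_apply, prod_univ_sum, mul_sum, Fintype.piFinset_univ]
  exact sum_comm

theorem Matrix.sum_perm_eq_zero_of_not_injective {M : Matrix ι S R} {N : Matrix S ι R}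
    {p : ι → S} (hp : ¬Injective p) :
    ∑ σ : Equiv.Perm ι, ε σ * ∏ i, M (σ i) (p i) * N (p i) i = 0 := by
  obtain ⟨i, j, hpij, hij⟩ : ∃ i j, p i = p j ∧ i ≠ j := by
    simpa only [Injective, not_forall, exists_prop] using hp
  -- the terms of `σ` and `σ * swap i j` cancel
  refine sum_involution (fun σ _ => σ * Equiv.swap i j) (fun σ _ => ?_)
    (fun σ _ _ => (not_congr Equiv.mul_swap_eq_iff).mpr hij) (fun _ _ => mem_univ _)
    fun σ _ => Equiv.mul_swap_involutive i j σ
  have : ∏ x, M (σ x) (p x) = ∏ x, M ((σ * Equiv.swap i j) x) (p x) :=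
    Fintype.prod_equiv (Equiv.swap i j) _ _ (by simp [Equiv.apply_swap_eq_self hpij])
  simp [this, Equiv.Perm.sign_swap hij, -Equiv.Perm.sign_swap', prod_mul_distrib]

theorem Matrix.det_mul_eq_sum_injective [Fintype S] [DecidableEq S]
    (M : Matrix ι S R) (N : Matrix S ι R) :
    det (M * N) = ∑ p : ι → S with Injective p,
      ∑ σ : Equiv.Perm ι, ε σ * ∏ i, M (σ i) (p i) * N (p i) i := by
  rw [det_mul_eq_sum_fun, ← sum_filter_add_sum_filter_not univ Injective,
    sum_eq_zero (s := filter _ _) fun p hp =>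
      sum_perm_eq_zero_of_not_injective (mem_filter.1 hp).2, add_zero]

theorem Matrix.det_mul_det_eq_sum_perm (A B : Matrix ι ι R) :
    det A * det B = ∑ τ : Equiv.Perm ι,
      ∑ σ : Equiv.Perm ι, ε σ * ∏ i, A (σ i) (τ i) * B (τ i) i := by
  rw [← det_mul, det_mul_eq_sum_injective]
  refine (sum_bij (fun (τ : Equiv.Perm ι) _ => ⇑τ)
    (fun τ _ => mem_filter.2 ⟨mem_univ _, τ.injective⟩)
    (fun _ _ _ _ h => Equiv.coe_fn_injective h) (fun p hp => ?_) fun _ _ => rfl).symm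
  exact ⟨Equiv.ofBijective p (Finite.injective_iff_bijective.1 (mem_filter.1 hp).2),
    mem_univ _, rfl⟩

/-- **Cauchy–Binet formula**. -/
theorem Matrix.det_mul_eq_sum_det_submatrix [Fintype S] [DecidableEq S]
    (M : Matrix ι S R) (N : Matrix S ι R)
    (e : ∀ F : {F : Finset S // F.card = Fintype.card ι}, ι ≃ F.1) :
    det (M * N) = ∑ F, det (M.submatrix id (fun i => (e F i : S))) *
      det (N.submatrix (fun i => (e F i : S)) id) := by
  simp only [det_mul_det_eq_sum_perm, submatrix_apply, id]
  rw [det_mul_eq_sum_injective, ← Fintype.sum_sigma fun x : Σ _ : {F : Finset S //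
    F.card = Fintype.card ι}, Equiv.Perm ι => ∑ σ : Equiv.Perm ι,
      ε σ * ∏ i, M (σ i) (e x.1 (x.2 i)) * N (e x.1 (x.2 i)) i]
  have hinj : ∀ F (τ : Equiv.Perm ι), Injective fun i => (e F (τ i) : S) := fun F τ =>
    Subtype.coe_injective.comp ((e F).injective.comp τ.injective)
  have image_eq : ∀ F (τ : Equiv.Perm ι), univ.image (fun i => (e F (τ i) : S)) = F.1 :=
    fun F τ => eq_of_subset_of_card_le
      (fun s hs => by obtain ⟨i, -, rfl⟩ := mem_image.1 hs; exact (e F _).2)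
      (by rw [card_image_of_injective _ (hinj F τ), F.2, card_univ])
  -- an injective `p : ι → S` is `e F ∘ τ` for exactly one pair of `F = range p` and `τ`
  symm
  refine sum_bij (fun x _ i => (e x.1 (x.2 i) : S))
    (fun x _ => mem_filter.2 ⟨mem_univ _, hinj x.1 x.2⟩)
    (fun x _ y _ h => ?_) (fun p hp => ?_) fun _ _ => rfl
  · obtain ⟨F, τ⟩ := x
    obtain ⟨F', τ'⟩ := y
    obtain rfl : F = F' := Subtype.ext <| by
      rw [← image_eq F τ, ← image_eq F' τ']
      exact congrArg (univ.image ·) h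
    simp only [Sigma.mk.injEq, heq_eq_eq, true_and]
    exact Equiv.ext fun i => (e F).injective (Subtype.ext (congrFun h i))
  · have hp := (mem_filter.1 hp).2
    let F : {F : Finset S // F.card = Fintype.card ι} :=
      ⟨univ.image p, by rw [card_image_of_injective _ hp, card_univ]⟩
    let τ : ι → ι := fun i => (e F).symm ⟨p i, mem_image_of_mem _ (mem_univ i)⟩
    have hτ : Injective τ := fun i j h =>
      hp (by simpa [τ] using congrArg (fun x => (e F x : S)) h)
    exact ⟨⟨F, Equiv.ofBijective τ (Finite.injective_iff_bijective.1 hτ)⟩,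
      mem_univ _, funext fun i => by simp [τ]⟩

theorem Matrix.det_mul_transpose_eq_sum_sq [Fintype S] [DecidableEq S] (M : Matrix ι S R)
    (e : ∀ F : {F : Finset S // F.card = Fintype.card ι}, ι ≃ F.1) :
    det (M * Mᵀ) = ∑ F, det (M.submatrix id (fun i => (e F i : S))) ^ 2 := by
  simp only [det_mul_eq_sum_det_submatrix M Mᵀ e, ← transpose_submatrix, det_transpose, sq]

end CauchyBinet

section TotallyUnimodular

variable {R : Type*} [CommRing R]

theorem sum_eq_zero_of_two_ne_zero {ι : Type*} [Fintype ι] {v : ι → R}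
    (hv : ∀ i, v i ∈ Set.range SignType.cast)
    (hpos : {i | v i = 1}.Subsingleton) (hneg : {i | v i = -1}.Subsingleton)
    {i₁ i₂ : ι} (hne : i₁ ≠ i₂) (h₁ : v i₁ ≠ 0) (h₂ : v i₂ ≠ 0) : ∑ i, v i = 0 := by
  have sign : ∀ i, v i ≠ 0 → v i = 1 ∨ v i = -1 := fun i hi => by
    obtain ⟨s, hs⟩ := hv i
    cases s <;> simp_all
  have key : ∀ a b, a ≠ b → v a = 1 → v b = -1 → ∑ i, v i = 0 := fun a b hab ha hb => by
    rw [Fintype.sum_eq_add a b hab fun x ⟨hxa, hxb⟩ => ?_, ha, hb, add_neg_cancel]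
    by_contra hx
    rcases sign x hx with h | h
    exacts [hxa (hpos h ha), hxb (hneg h hb)]
  rcases sign i₁ h₁ with h₁ | h₁ <;> rcases sign i₂ h₂ with h₂ | h₂
  exacts [absurd (hpos h₁ h₂) hne, key i₁ i₂ hne h₁ h₂, key i₂ i₁ hne.symm h₂ h₁,
    absurd (hneg h₁ h₂) hne]

theorem Matrix.det_mem_range_signType_cast_of_col_subsingleton {k : ℕ}
    (A : Matrix (Fin k) (Fin k) R) (hA : ∀ i j, A i j ∈ Set.range SignType.cast)
    (hpos : ∀ j, {i | A i j = 1}.Subsingleton) (hneg : ∀ j, {i | A i j = -1}.Subsingleton) :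
    A.det ∈ Set.range SignType.cast := by
  induction k with
  | zero => exact ⟨1, by simp⟩
  | succ k ih =>
    by_cases hcol : ∃ j i₀, ∀ i ≠ i₀, A i j = 0
    · obtain ⟨j, i₀, hj⟩ := hcol
      rw [det_succ_column A j, Fintype.sum_eq_single i₀ fun i hi => by simp [hj i hi]]
      change _ ∈ MonoidHom.mrange SignType.castHom.toMonoidHom
      have neg_one_mem : (-1 : R) ∈ MonoidHom.mrange SignType.castHom.toMonoidHom :=
        ⟨-1, by simp⟩
      exact mul_mem (mul_mem (pow_mem neg_one_mem _) (hA i₀ j)) (ih _ (fun _ _ => hA _ _)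
        (fun _ => (hpos _).preimage Fin.succAbove_right_injective)
        (fun _ => (hneg _).preimage Fin.succAbove_right_injective))
    · push Not at hcol
      -- every column now holds exactly one `1` and one `-1`, so the rows sum to zero
      have hsum : Aᵀ *ᵥ 1 = 0 := funext fun j => by
        obtain ⟨i₁, -, h₁⟩ := hcol j 0
        obtain ⟨i₂, hne, h₂⟩ := hcol j i₁
        simpa [mulVec, dotProduct] using
          sum_eq_zero_of_two_ne_zero (fun i => hA i j) (hpos j) (hneg j) hne h₂ h₁
      refine ⟨0, ?_⟩
      rw [SignType.coe_zero, ← det_transpose,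
        det_eq_zero_of_mulVec_eq_zero_of_mem_nonZeroDivisors hsum (i := 0) (one_mem _)]

theorem Matrix.isTotallyUnimodular_of_col_subsingleton {m n : Type*} {A : Matrix m n R}
    (hA : ∀ i j, A i j ∈ Set.range SignType.cast)
    (hpos : ∀ j, {i | A i j = 1}.Subsingleton) (hneg : ∀ j, {i | A i j = -1}.Subsingleton) :
    A.IsTotallyUnimodular := fun _ _ _ hf _ =>
  det_mem_range_signType_cast_of_col_subsingleton _ (fun _ _ => hA _ _)
    (fun _ => (hpos _).preimage hf) (fun _ => (hneg _).preimage hf)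

theorem Matrix.IsTotallyUnimodular.sq_det_submatrix_eq_one {m n : Type*} {A : Matrix m n R}
    (hA : A.IsTotallyUnimodular) {ι : Type*} [Fintype ι] [DecidableEq ι] {f : ι → m}
    {g : ι → n} (h : (A.submatrix f g).det ≠ 0) :
    (A.submatrix f g).det ^ 2 = 1 := by
  obtain ⟨s, hs⟩ := (isTotallyUnimodular_iff_fintype A).1 hA ι f g
  rw [← hs] at h ⊢
  cases s <;> simp at h ⊢

end TotallyUnimodular

theorem Matrix.det_fromBlocks_smul_one_const {K : Type*} [Field K] {m n : Type*} [Fintype m]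
    [Fintype n] [DecidableEq m] [DecidableEq n] {a b : K} (ha : a ≠ 0) (hb : b ≠ 0) (c : K) :
    det (fromBlocks (a • 1 : Matrix m m K) (of fun _ _ => c) (of fun _ _ => c)
      (b • 1 : Matrix n n K)) =
      a ^ Fintype.card m * b ^ Fintype.card n *
        (1 - Fintype.card m * Fintype.card n * c ^ 2 / (a * b)) := by
  let : Invertible (a • 1 : Matrix m m K) :=
    ⟨a⁻¹ • 1, by simp [smul_smul, ha], by simp [smul_smul, ha]⟩
  have schur : b • 1 - (of fun _ _ => c : Matrix n m K) * ⅟(a • 1 : Matrix m m K) *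
      (of fun _ _ => c : Matrix m n K) =
      b • (1 + replicateCol Unit (fun _ : n => -(Fintype.card m * c ^ 2 / (a * b))) *
        replicateRow Unit (fun _ : n => (1 : K))) := by
    ext i j
    by_cases h : i = j
    · simp [h, show ⅟(a • 1 : Matrix m m K) = a⁻¹ • 1 from rfl, mul_apply]
      field_simp
      ring
    · simp [h, show ⅟(a • 1 : Matrix m m K) = a⁻¹ • 1 from rfl, mul_apply]
      field_simp
  rw [det_fromBlocks₁₁, schur, det_smul, det_smul, det_one,
    det_one_add_replicateCol_mul_replicateRow]
  simp only [dotProduct, mul_one, sum_const, card_univ, nsmul_eq_mul]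
  field_simp
  ring

theorem natCard_finset_card_eq_and_eq_sum {α M : Type*} [Fintype α] [AddCommMonoidWithOne M] {n : ℕ}
    (P : Finset α → Prop) [DecidablePred P] :
    (Nat.card {F : Finset α // F.card = n ∧ P F} : M) =
      ∑ F : {F : Finset α // F.card = n}, if P F then 1 else 0 := by
  rw [← Nat.card_congr (Equiv.subtypeSubtypeEquivSubtypeInter _ _), Nat.card_eq_fintype_card,
    Fintype.card_subtype, sum_boole]

/-- Column `(i, j)` is the edge of `K_{I,J}` from row level `i` (entry `1`) to column level `j`
(entry `-1`); the row of the last column level is deleted. -/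
def reducedIncidence (I J : ℕ) : Matrix (Fin I ⊕ Fin (J - 1)) (Fin I × Fin J) ℝ :=
  of fun x p => Sum.elim (fun a => if p.1 = a then 1 else 0)
    (fun b => if p.2 = Fin.castLE (Nat.sub_le J 1) b then -1 else 0) x

theorem isTotallyUnimodular_reducedIncidence (I J : ℕ) :
    (reducedIncidence I J).IsTotallyUnimodular := by
  refine isTotallyUnimodular_of_col_subsingleton (fun x p => ?_) (fun p => ?_) (fun p => ?_)
  · rcases x with a | b <;> simp only [reducedIncidence, of_apply, Sum.elim_inl, Sum.elim_inr] <;>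
      split_ifs
    exacts [⟨1, SignType.coe_one⟩, ⟨0, SignType.coe_zero⟩, ⟨-1, SignType.coe_neg_one⟩,
      ⟨0, SignType.coe_zero⟩]
  · refine Set.subsingleton_of_forall_eq (.inl p.1) fun x hx => ?_
    rcases x with a | b <;> norm_num [reducedIncidence, ite_eq_iff] at hx
    exact congrArg Sum.inl hx.symm
  · intro x hx y hy
    rcases x with a | b <;> rcases y with a' | b' <;>
      norm_num [reducedIncidence, ite_eq_iff] at *
    exact Fin.castLE_injective _ (hx.symm.trans hy)

theorem reducedIncidence_mul_transpose (I J : ℕ) :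
    reducedIncidence I J * (reducedIncidence I J)ᵀ =
      fromBlocks ((J : ℝ) • 1) (of fun _ _ => -1) (of fun _ _ => -1) ((I : ℝ) • 1) := by
  ext (a | b) (a' | b')
  · by_cases h : a = a' <;>
      simp [h, reducedIncidence, mul_apply, Fintype.sum_prod_type, one_apply, eq_comm]
  · simp [reducedIncidence, mul_apply, Fintype.sum_prod_type]
  · simp [reducedIncidence, mul_apply, Fintype.sum_prod_type]
  · by_cases h : b = b' <;>
      simp [h, reducedIncidence, mul_apply, Fintype.sum_prod_type, one_apply, eq_comm]

theorem det_reducedIncidence_mul_transpose {I J : ℕ} (hI : 0 < I) (hJ : 0 < J) :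
    det (reducedIncidence I J * (reducedIncidence I J)ᵀ) = I ^ (J - 1) * J ^ (I - 1) := by
  rw [reducedIncidence_mul_transpose,
    det_fromBlocks_smul_one_const (by positivity) (by positivity)]
  have hJI : (J : ℝ) ^ I = J * J ^ (I - 1) := by rw [← pow_succ', Nat.sub_add_cancel hI]
  simp only [Fintype.card_fin, Nat.cast_sub hJ, Nat.cast_one, hJI]
  field_simp
  ring

/-- The indicator of the last row level is the grand mean minus the other row indicators. -/
def modelRowToIncidence (I J : ℕ) :
    (ℝ × (Fin (I - 1) → ℝ) × (Fin (J - 1) → ℝ)) →ₗ[ℝ] (Fin I ⊕ Fin (J - 1) → ℝ) where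
  toFun v := Sum.elim
    (fun a => if h : (a : ℕ) < I - 1 then v.2.1 ⟨a, h⟩ else v.1 - ∑ a', v.2.1 a')
    (fun b => -v.2.2 b)
  map_add' u v := by
    ext (a | b)
    · simp only [Prod.fst_add, Prod.snd_add, Pi.add_apply, Sum.elim_inl, sum_add_distrib]
      split_ifs <;> ring
    · simp only [Prod.snd_add, Pi.add_apply, Sum.elim_inr]
      ring
  map_smul' c v := by
    ext (a | b)
    · simp only [Prod.smul_fst, Prod.smul_snd, Pi.smul_apply, smul_eq_mul, Sum.elim_inl,
        RingHom.id_apply, ← mul_sum]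
      split_ifs <;> ring
    · simp

theorem ker_modelRowToIncidence {I J : ℕ} (hI : 0 < I) :
    LinearMap.ker (modelRowToIncidence I J) = ⊥ := by
  refine LinearMap.ker_eq_bot'.2 fun v hv => ?_
  have h₃ : v.2.2 = 0 := funext fun b => by
    simpa [modelRowToIncidence] using congrFun hv (.inr b)
  have h₂ : v.2.1 = 0 := funext fun a => by
    simpa [modelRowToIncidence] using congrFun hv (.inl (Fin.castLE (Nat.sub_le I 1) a))
  have h₁ : v.1 = 0 := by
    simpa [modelRowToIncidence, h₂] using congrFun hv (.inl ⟨I - 1, by omega⟩)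
  exact Prod.ext h₁ (Prod.ext h₂ h₃)

theorem modelRowToIncidence_modelRow {I J : ℕ} (p : Fin I × Fin J) :
    modelRowToIncidence I J (modelRow p) = (reducedIncidence I J)ᵀ p := by
  ext (a | b)
  · have hsum : ∑ a' : Fin (I - 1), (if (p.1 : ℕ) = a' then (1 : ℝ) else 0) =
        if (p.1 : ℕ) < I - 1 then 1 else 0 := by
      simp only [Fin.sum_univ_eq_sum_range (fun k => if (p.1 : ℕ) = k then (1 : ℝ) else 0),
        sum_ite_eq, mem_range]
    simp only [modelRowToIncidence, modelRow, LinearMap.coe_mk, AddHom.coe_mk, hsum,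
      Sum.elim_inl, reducedIncidence, Fin.ext_iff, Fin.val_castLE, transpose_apply, of_apply]
    split_ifs <;> first | omega | norm_num
  · simp [modelRowToIncidence, modelRow, reducedIncidence, Fin.ext_iff, apply_ite]

theorem linearIndependent_modelRow_iff {I J : ℕ} (hI : 0 < I) (F : Finset (Fin I × Fin J))
    (e : Fin I ⊕ Fin (J - 1) ≃ F) :
    LinearIndependent ℝ (fun p : F => modelRow p.1) ↔
      det ((reducedIncidence I J).submatrix id (fun x => (e x : Fin I × Fin J))) ≠ 0 := by
  have columns : (modelRowToIncidence I J ∘ fun p : F => modelRow p.1) ∘ e =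
      ((reducedIncidence I J).submatrix id (fun x => (e x : Fin I × Fin J)))ᵀ.row := by
    ext x y
    simp [modelRowToIncidence_modelRow]
  rw [← LinearMap.linearIndependent_iff _ (ker_modelRowToIncidence hI),
    ← linearIndependent_equiv e, columns, linearIndependent_rows_iff_isUnit,
    isUnit_iff_isUnit_det, det_transpose, isUnit_iff_ne_zero]

/-- The number of saturated fractions of the `I × J` design, i.e. finsets of
`Fin I × Fin J` with `I + J - 1` points whose model rows are linearly independent
over `ℝ`, equals `I^(J-1) · J^(I-1)`. -/
theorem card_saturated_designs {I J : ℕ} (hI : 2 ≤ I) (hJ : 2 ≤ J) :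
    Nat.card {F : Finset (Fin I × Fin J) //
      F.card = I + J - 1 ∧
      LinearIndependent ℝ (fun p : F => modelRow p.1)} =
    I ^ (J - 1) * J ^ (I - 1) := by
  classical
  have hcard : Fintype.card (Fin I ⊕ Fin (J - 1)) = I + J - 1 := by
    simp only [Fintype.card_sum, Fintype.card_fin]
    omega
  let e (F : {F : Finset (Fin I × Fin J) // F.card = Fintype.card (Fin I ⊕ Fin (J - 1))}) :
      Fin I ⊕ Fin (J - 1) ≃ F.1 := Fintype.equivOfCardEq (by rw [Fintype.card_coe, F.2])
  suffices (Nat.card {F : Finset (Fin I × Fin J) // F.card = I + J - 1 ∧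
      LinearIndependent ℝ (fun p : F => modelRow p.1)} : ℝ) = I ^ (J - 1) * J ^ (I - 1) by
    exact_mod_cast this
  rw [← hcard, natCard_finset_card_eq_and_eq_sum,
    ← det_reducedIncidence_mul_transpose (by omega) (by omega), det_mul_transpose_eq_sum_sq _ e]
  refine sum_congr rfl fun F _ => ?_
  have hli := linearIndependent_modelRow_iff (by omega) F.1 (e F)
  split_ifs with h
  · exact ((isTotallyUnimodular_reducedIncidence I J).sq_det_submatrix_eq_one (hli.1 h)).symm
  · rw [not_not.1 (hli.not.1 h), zero_pow two_ne_zero]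
end

section
/- Let I, J ≥ 2 and let F and F' be finsets of Fin I × Fin J with the same margins, i.e., for every i ∈ Fin I, card {p ∈ F : p.1 = i} = card {p ∈ F' : p.1 = i}, and for every j ∈ Fin J, card {p ∈ F : p.2 = j} = card {p ∈ F' : p.2 = j}. Then there exists a finite sequence F = F₀, F₁, …, Fₙ = F' of finsets of Fin I × Fin J, each with the same margins as F, such that for every t < n the sets D₋ = Fₜ \ Fₜ₊₁ and D₊ = Fₜ₊₁ \ Fₜ satisfy: D₋ ∪ D₊ is a k-cycle for some k ≥ 2, and D₋ and D₊ are its two parts of cardinality k, each containing every row level occurring in D₋ ∪ D₊ as first coordinate exactly once and every column level occurring in D₋ ∪ D₊ as second coordinate exactly once. (That is, the k-cycle moves form a Markov basis connecting all binary tables with fixed row and column margins.) -/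
section MarkovBasisAux
open Finset

private lemma filter_card_one {α β : Type*} [DecidableEq α] [DecidableEq β]
    {f : α → β} {D : Finset α} (h : Set.InjOn f (D : Set α)) {b : β}
    (hb : b ∈ D.image f) : (D.filter fun p => f p = b).card = 1 := by
  obtain ⟨a, ha, rfl⟩ := mem_image.1 hb
  rw [card_eq_one]
  refine ⟨a, ?_⟩
  ext x
  simp only [mem_filter, mem_singleton]
  constructor
  · rintro ⟨hx, hfx⟩
    exact h hx ha hfx
  · rintro rfl
    exact ⟨ha, rfl⟩

private lemma filter_card_eq' {α β : Type*} [DecidableEq α] [DecidableEq β]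
    {f : α → β} {Dm Dp : Finset α} (h1 : Set.InjOn f (Dm : Set α)) (h2 : Set.InjOn f (Dp : Set α))
    (him : Dm.image f = Dp.image f) (b : β) :
    (Dm.filter fun p => f p = b).card = (Dp.filter fun p => f p = b).card := by
  by_cases hb : b ∈ Dm.image f
  · rw [filter_card_one h1 hb, filter_card_one h2 (him ▸ hb)]
  · have e1 : Dm.filter (fun p => f p = b) = ∅ :=
      filter_eq_empty_iff.2 fun x hx hfx => hb (mem_image.2 ⟨x, hx, hfx⟩)
    have e2 : Dp.filter (fun p => f p = b) = ∅ :=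
      filter_eq_empty_iff.2 fun x hx hfx => hb (him ▸ mem_image.2 ⟨x, hx, hfx⟩)
    rw [e1, e2]

private lemma card_filter_step {α : Type*} [DecidableEq α] {F Dm Dp : Finset α}
    (hm : Dm ⊆ F) (hp : Disjoint Dp F) (q : α → Prop) [DecidablePred q]
    (hcard : (Dm.filter q).card = (Dp.filter q).card) :
    (((F \ Dm) ∪ Dp).filter q).card = (F.filter q).card := by
  have hd : Disjoint ((F \ Dm).filter q) (Dp.filter q) :=
    disjoint_filter_filter (disjoint_of_subset_left sdiff_subset hp.symm)
  have hsd : (F \ Dm).filter q = (F.filter q) \ (Dm.filter q) := by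
    ext x; simp only [mem_filter, mem_sdiff]; tauto
  have hsub : Dm.filter q ⊆ F.filter q := filter_subset_filter q hm
  rw [filter_union, card_union_of_disjoint hd, hsd, card_sdiff_of_subset hsub]
  have := card_le_card hsub
  omega

private lemma image_shift {γ : Type*} [DecidableEq γ] (f : ℕ → γ) {s T : ℕ} (hsT : s < T)
    (hfT : f T = f s) :
    (Finset.Ico s T).image (fun u => f (u + 1)) = (Finset.Ico s T).image f := by
  ext x
  simp only [mem_image, mem_Ico]
  constructor
  · rintro ⟨u, ⟨hsu, huT⟩, rfl⟩
    rcases eq_or_lt_of_le (Nat.succ_le_of_lt huT) with h | h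
    · refine ⟨s, ⟨le_rfl, hsT⟩, ?_⟩
      have : u + 1 = T := h
      rw [this, hfT]
    · exact ⟨u + 1, ⟨by omega, h⟩, rfl⟩
  · rintro ⟨v, ⟨hsv, hvT⟩, rfl⟩
    rcases eq_or_lt_of_le hsv with h | h
    · refine ⟨T - 1, ⟨by omega, by omega⟩, ?_⟩
      have hT1 : T - 1 + 1 = T := by omega
      rw [hT1, hfT, h]
    · refine ⟨v - 1, ⟨by omega, by omega⟩, ?_⟩
      have hv1 : v - 1 + 1 = v := by omega
      rw [hv1]

private lemma image_inj_aux {γ β : Type*} [DecidableEq γ] [DecidableEq β] {S : Finset ℕ}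
    {f : ℕ → γ} {φ : γ → β}
    (h : ∀ u ∈ S, ∀ v ∈ S, φ (f u) = φ (f v) → u = v) :
    Set.InjOn φ ((S.image f : Finset γ) : Set γ) ∧ (S.image f).card = S.card := by
  constructor
  · intro x hx y hy hxy
    obtain ⟨u, hu, rfl⟩ := mem_image.1 (mem_coe.1 hx)
    obtain ⟨v, hv, rfl⟩ := mem_image.1 (mem_coe.1 hy)
    rw [h u hu v hv hxy]
  · exact card_image_of_injOn fun u hu v hv huv => h u hu v hv (by rw [huv])
private lemma two_le_k {I J : ℕ} {Dm Dp : Finset (Fin I × Fin J)} {k : ℕ}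
    (hd : Disjoint Dm Dp) (h1 : Dm.card = k) (h2 : Dp.card = k) (hk : 1 ≤ k)
    (hf : Dm.image Prod.fst = Dp.image Prod.fst)
    (hs : Dm.image Prod.snd = Dp.image Prod.snd) : 2 ≤ k := by
  rcases Nat.lt_or_ge k 2 with h | h
  · exfalso
    have hk1 : k = 1 := by omega
    rw [hk1] at h1 h2
    obtain ⟨a, rfl⟩ := card_eq_one.1 h1
    obtain ⟨b, rfl⟩ := card_eq_one.1 h2
    simp only [image_singleton] at hf hs
    have hab : a = b := Prod.ext (singleton_injective hf) (singleton_injective hs)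
    exact disjoint_left.mp hd (mem_singleton_self a) (by rw [hab]; exact mem_singleton_self b)
  · exact h

private lemma extract_cycle {I J : ℕ} (A B : Finset (Fin I × Fin J))
    (hdisj : Disjoint A B) (hne : A.Nonempty)
    (hrow : ∀ i, (A.filter fun p => p.1 = i).card = (B.filter fun p => p.1 = i).card)
    (hcol : ∀ j, (A.filter fun p => p.2 = j).card = (B.filter fun p => p.2 = j).card) :
    ∃ (k : ℕ) (Dm Dp : Finset (Fin I × Fin J)), 2 ≤ k ∧ Dm ⊆ A ∧ Dp ⊆ B ∧
      Dm.card = k ∧ Dp.card = k ∧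
      Dm.image Prod.fst = Dp.image Prod.fst ∧
      Dm.image Prod.snd = Dp.image Prod.snd ∧
      Set.InjOn Prod.fst (↑Dm : Set (Fin I × Fin J)) ∧
      Set.InjOn Prod.fst (↑Dp : Set (Fin I × Fin J)) ∧
      Set.InjOn Prod.snd (↑Dm : Set (Fin I × Fin J)) ∧
      Set.InjOn Prod.snd (↑Dp : Set (Fin I × Fin J)) := by
  classical
  have stepQ : ∀ x, x ∈ A → ∃ q, q ∈ B ∧ q.1 = x.1 := by
    intro x hx
    have h1 : 0 < (A.filter fun p => p.1 = x.1).card :=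
      card_pos.2 ⟨x, mem_filter.2 ⟨hx, rfl⟩⟩
    have h2 : 0 < (B.filter fun p => p.1 = x.1).card := hrow x.1 ▸ h1
    obtain ⟨q, hq⟩ := card_pos.1 h2
    exact ⟨q, (mem_filter.1 hq).1, (mem_filter.1 hq).2⟩
  have stepP : ∀ q, q ∈ B → ∃ p, p ∈ A ∧ p.2 = q.2 := by
    intro q hq
    have h1 : 0 < (B.filter fun p => p.2 = q.2).card :=
      card_pos.2 ⟨q, mem_filter.2 ⟨hq, rfl⟩⟩
    have h2 : 0 < (A.filter fun p => p.2 = q.2).card := (hcol q.2).symm ▸ h1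
    obtain ⟨p, hp⟩ := card_pos.1 h2
    exact ⟨p, (mem_filter.1 hp).1, (mem_filter.1 hp).2⟩
  choose fQ hfQB hfQ1 using stepQ
  choose fP hfPA hfP2 using stepP
  obtain ⟨a0, ha0⟩ := hne
  set g : Fin I × Fin J → Fin I × Fin J :=
    fun x => if h : x ∈ A then fP (fQ x h) (hfQB x h) else x with hg
  set P : ℕ → Fin I × Fin J := fun n => g^[n] a0 with hPdef
  have hPA : ∀ n, P n ∈ A := by
    intro n
    induction n with
    | zero => simpa [hPdef] using ha0
    | succ n ih =>
      have hit : P (n + 1) = g (P n) := Function.iterate_succ_apply' g n a0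
      rw [hit, hg]
      simp only [dif_pos ih]
      exact hfPA _ _
  set Q : ℕ → Fin I × Fin J := fun n => fQ (P n) (hPA n) with hQdef
  have hQB : ∀ n, Q n ∈ B := fun n => hfQB _ _
  have hQ1 : ∀ n, (Q n).1 = (P n).1 := fun n => hfQ1 _ _
  have hP2 : ∀ n, (P (n + 1)).2 = (Q n).2 := by
    intro n
    have hit : P (n + 1) = g (P n) := Function.iterate_succ_apply' g n a0
    rw [hit, hg]
    simp only [dif_pos (hPA n)]
    exact hfP2 _ _
  -- Find first repeated row or column vertex
  have hBadEx : ∃ t, (∃ s < t, (P t).1 = (P s).1) ∨ (∃ s < t, (Q t).2 = (Q s).2) := by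
    obtain ⟨x, y, hxy, hrxy⟩ := Fintype.exists_ne_map_eq_of_card_lt
      (fun m : Fin (I + 1) => (P (m : ℕ)).1) (by simp)
    rcases lt_or_gt_of_ne hxy with h | h
    · exact ⟨(y : ℕ), Or.inl ⟨(x : ℕ), h, hrxy.symm⟩⟩
    · exact ⟨(x : ℕ), Or.inl ⟨(y : ℕ), h, hrxy⟩⟩
  set T := Nat.find hBadEx with hTdef
  have hBadT := Nat.find_spec hBadEx
  have hmin : ∀ u < T, ¬ ((∃ s < u, (P u).1 = (P s).1) ∨ (∃ s < u, (Q u).2 = (Q s).2)) :=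
    fun u hu => Nat.find_min hBadEx hu
  have hrinj : ∀ u < T, ∀ v < T, (P u).1 = (P v).1 → u = v := by
    intro u hu v hv he
    rcases lt_trichotomy u v with h | h | h
    · exact absurd (Or.inl ⟨u, h, he.symm⟩) (hmin v hv)
    · exact h
    · exact absurd (Or.inl ⟨v, h, he⟩) (hmin u hu)
  have hcinj : ∀ u < T, ∀ v < T, (Q u).2 = (Q v).2 → u = v := by
    intro u hu v hv he
    rcases lt_trichotomy u v with h | h | h
    · exact absurd (Or.inr ⟨u, h, he.symm⟩) (hmin v hv)
    · exact h
    · exact absurd (Or.inr ⟨v, h, he⟩) (hmin u hu)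
  by_cases hAcase : ∃ s < T, (P T).1 = (P s).1
  · -- Case A: row repeat
    obtain ⟨s, hsT, hrT⟩ := hAcase
    set Dm : Finset (Fin I × Fin J) := (Ico s T).image (fun u => P (u + 1)) with hDm
    set Dp : Finset (Fin I × Fin J) := (Ico s T).image Q with hDp
    have hDmA : Dm ⊆ A := by
      intro x hx
      obtain ⟨u, _, rfl⟩ := mem_image.1 hx
      exact hPA _
    have hDpB : Dp ⊆ B := by
      intro x hx
      obtain ⟨u, _, rfl⟩ := mem_image.1 hx
      exact hQB _
    -- row injectivity of shifted P
    have hA_rinj : ∀ u ∈ Ico s T, ∀ v ∈ Ico s T,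
        (P (u + 1)).1 = (P (v + 1)).1 → u = v := by
      intro u hu v hv he
      simp only [mem_Ico] at hu hv
      rcases eq_or_lt_of_le (Nat.succ_le_of_lt hu.2) with h | h
      · rcases eq_or_lt_of_le (Nat.succ_le_of_lt hv.2) with h' | h'
        · omega
        · have hps : (P (v + 1)).1 = (P s).1 := by
            have hTe : u + 1 = T := h
            rw [← he, hTe, hrT]
          have := hrinj (v + 1) h' s hsT hps
          omega
      · rcases eq_or_lt_of_le (Nat.succ_le_of_lt hv.2) with h' | h'
        · have hps : (P (u + 1)).1 = (P s).1 := by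
            have hTe : v + 1 = T := h'
            rw [he, hTe, hrT]
          have := hrinj (u + 1) h s hsT hps
          omega
        · exact Nat.succ_injective (hrinj _ h _ h' he)
    -- column injectivity indices
    have hA_cinjm : ∀ u ∈ Ico s T, ∀ v ∈ Ico s T,
        (P (u + 1)).2 = (P (v + 1)).2 → u = v := by
      intro u hu v hv he
      simp only [mem_Ico] at hu hv
      rw [hP2 u, hP2 v] at he
      exact hcinj u hu.2 v hv.2 he
    have hA_finjp : ∀ u ∈ Ico s T, ∀ v ∈ Ico s T, (Q u).1 = (Q v).1 → u = v := by
      intro u hu v hv he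
      simp only [mem_Ico] at hu hv
      rw [hQ1 u, hQ1 v] at he
      exact hrinj u hu.2 v hv.2 he
    have hA_cinjp : ∀ u ∈ Ico s T, ∀ v ∈ Ico s T, (Q u).2 = (Q v).2 → u = v := by
      intro u hu v hv he
      simp only [mem_Ico] at hu hv
      exact hcinj u hu.2 v hv.2 he
    obtain ⟨imf, hcardm⟩ := image_inj_aux (f := fun u => P (u + 1)) (φ := Prod.fst) hA_rinj
    obtain ⟨ims, _⟩ := image_inj_aux (f := fun u => P (u + 1)) (φ := Prod.snd) hA_cinjm
    obtain ⟨ipf, hcardp⟩ := image_inj_aux (f := Q) (φ := Prod.fst) hA_finjp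
    obtain ⟨ips, _⟩ := image_inj_aux (f := Q) (φ := Prod.snd) hA_cinjp
    have hfimg : Dm.image Prod.fst = Dp.image Prod.fst := by
      rw [hDm, hDp, image_image, image_image]
      have e1 : (Ico s T).image (fun u => (P (u + 1)).1)
          = (Ico s T).image (fun u => (P u).1) :=
        image_shift (fun n => (P n).1) hsT hrT
      have e2 : (Ico s T).image (fun u => (Q u).1)
          = (Ico s T).image (fun u => (P u).1) :=
        image_congr fun u _ => hQ1 u
      exact e1.trans e2.symm
    have hsimg : Dm.image Prod.snd = Dp.image Prod.snd := by
      rw [hDm, hDp, image_image, image_image]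
      exact image_congr fun u _ => hP2 u
    have hkm : Dm.card = T - s := by rw [hDm, hcardm, Nat.card_Ico]
    have hkp : Dp.card = T - s := by rw [hDp, hcardp, Nat.card_Ico]
    have hdmp : Disjoint Dm Dp := disjoint_of_subset_left hDmA (disjoint_of_subset_right hDpB hdisj)
    have hk2 : 2 ≤ T - s := two_le_k hdmp hkm hkp (by omega) hfimg hsimg
    exact ⟨T - s, Dm, Dp, hk2, hDmA, hDpB, hkm, hkp, hfimg, hsimg, imf, ipf, ims, ips⟩
  · -- Case B: column repeat
    have hBcase : ∃ s < T, (Q T).2 = (Q s).2 := hBadT.resolve_left hAcase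
    obtain ⟨s, hsT, hcT⟩ := hBcase
    set Dm : Finset (Fin I × Fin J) := (Ico s T).image (fun u => P (u + 1)) with hDm
    set Dp : Finset (Fin I × Fin J) := (Ico s T).image (fun u => Q (u + 1)) with hDp
    have hDmA : Dm ⊆ A := by
      intro x hx
      obtain ⟨u, _, rfl⟩ := mem_image.1 hx
      exact hPA _
    have hDpB : Dp ⊆ B := by
      intro x hx
      obtain ⟨u, _, rfl⟩ := mem_image.1 hx
      exact hQB _
    -- rows at indices s+1..T are all distinct (no row repeat at T)
    have hrinj' : ∀ u, u + 1 ≤ T → ∀ v, v + 1 ≤ T → (P (u + 1)).1 = (P (v + 1)).1 → u = v := by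
      intro u hu v hv he
      rcases eq_or_lt_of_le hu with h | h
      · rcases eq_or_lt_of_le hv with h' | h'
        · omega
        · rw [h] at he
          exact absurd ⟨v + 1, h', he⟩ hAcase
      · rcases eq_or_lt_of_le hv with h' | h'
        · rw [h'] at he
          exact absurd ⟨u + 1, h, he.symm⟩ hAcase
        · exact Nat.succ_injective (hrinj _ h _ h' he)
    have hB_rinjm : ∀ u ∈ Ico s T, ∀ v ∈ Ico s T,
        (P (u + 1)).1 = (P (v + 1)).1 → u = v := by
      intro u hu v hv he
      simp only [mem_Ico] at hu hv
      exact hrinj' u hu.2 v hv.2 he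
    have hB_rinjp : ∀ u ∈ Ico s T, ∀ v ∈ Ico s T,
        (Q (u + 1)).1 = (Q (v + 1)).1 → u = v := by
      intro u hu v hv he
      simp only [mem_Ico] at hu hv
      rw [hQ1, hQ1] at he
      exact hrinj' u hu.2 v hv.2 he
    have hB_cinjm : ∀ u ∈ Ico s T, ∀ v ∈ Ico s T,
        (P (u + 1)).2 = (P (v + 1)).2 → u = v := by
      intro u hu v hv he
      simp only [mem_Ico] at hu hv
      rw [hP2 u, hP2 v] at he
      exact hcinj u hu.2 v hv.2 he
    have hB_cinjp : ∀ u ∈ Ico s T, ∀ v ∈ Ico s T,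
        (Q (u + 1)).2 = (Q (v + 1)).2 → u = v := by
      intro u hu v hv he
      simp only [mem_Ico] at hu hv
      rcases eq_or_lt_of_le (Nat.succ_le_of_lt hu.2) with h | h
      · rcases eq_or_lt_of_le (Nat.succ_le_of_lt hv.2) with h' | h'
        · omega
        · have hqs : (Q (v + 1)).2 = (Q s).2 := by
            have hTe : u + 1 = T := h
            rw [← he, hTe, hcT]
          have := hcinj (v + 1) h' s hsT hqs
          omega
      · rcases eq_or_lt_of_le (Nat.succ_le_of_lt hv.2) with h' | h'
        · have hqs : (Q (u + 1)).2 = (Q s).2 := by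
            have hTe : v + 1 = T := h'
            rw [he, hTe, hcT]
          have := hcinj (u + 1) h s hsT hqs
          omega
        · exact Nat.succ_injective (hcinj _ h _ h' he)
    obtain ⟨imf, hcardm⟩ := image_inj_aux (f := fun u => P (u + 1)) (φ := Prod.fst) hB_rinjm
    obtain ⟨ims, _⟩ := image_inj_aux (f := fun u => P (u + 1)) (φ := Prod.snd) hB_cinjm
    obtain ⟨ipf, hcardp⟩ := image_inj_aux (f := fun u => Q (u + 1)) (φ := Prod.fst) hB_rinjp
    obtain ⟨ips, _⟩ := image_inj_aux (f := fun u => Q (u + 1)) (φ := Prod.snd) hB_cinjp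
    have hfimg : Dm.image Prod.fst = Dp.image Prod.fst := by
      rw [hDm, hDp, image_image, image_image]
      exact image_congr fun u _ => (hQ1 (u + 1)).symm
    have hsimg : Dm.image Prod.snd = Dp.image Prod.snd := by
      rw [hDm, hDp, image_image, image_image]
      have e1 : (Ico s T).image (fun u => (P (u + 1)).2)
          = (Ico s T).image (fun u => (Q u).2) :=
        image_congr fun u _ => hP2 u
      have e2 : (Ico s T).image (fun u => (Q (u + 1)).2)
          = (Ico s T).image (fun u => (Q u).2) :=
        image_shift (fun n => (Q n).2) hsT hcT
      exact e1.trans e2.symm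
    have hkm : Dm.card = T - s := by rw [hDm, hcardm, Nat.card_Ico]
    have hkp : Dp.card = T - s := by rw [hDp, hcardp, Nat.card_Ico]
    have hdmp : Disjoint Dm Dp := disjoint_of_subset_left hDmA (disjoint_of_subset_right hDpB hdisj)
    have hk2 : 2 ≤ T - s := two_le_k hdmp hkm hkp (by omega) hfimg hsimg
    exact ⟨T - s, Dm, Dp, hk2, hDmA, hDpB, hkm, hkp, hfimg, hsimg, imf, ipf, ims, ips⟩
private lemma cycle_of_parts {I J : ℕ} {k : ℕ} {Dm Dp : Finset (Fin I × Fin J)}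
    (hd : Disjoint Dm Dp) (hm : Dm.card = k) (hp : Dp.card = k)
    (hf : Dm.image Prod.fst = Dp.image Prod.fst)
    (hs : Dm.image Prod.snd = Dp.image Prod.snd)
    (imf : Set.InjOn Prod.fst (↑Dm : Set (Fin I × Fin J))) (ipf : Set.InjOn Prod.fst (↑Dp : Set (Fin I × Fin J)))
    (ims : Set.InjOn Prod.snd (↑Dm : Set (Fin I × Fin J))) (ips : Set.InjOn Prod.snd (↑Dp : Set (Fin I × Fin J))) :
    IsKCycle k (Dm ∪ Dp) ∧
    (∀ i ∈ (Dm ∪ Dp).image Prod.fst,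
      (Dm.filter fun p => p.1 = i).card = 1 ∧ (Dp.filter fun p => p.1 = i).card = 1) ∧
    (∀ j ∈ (Dm ∪ Dp).image Prod.snd,
      (Dm.filter fun p => p.2 = j).card = 1 ∧ (Dp.filter fun p => p.2 = j).card = 1) := by
  classical
  have himg : (Dm ∪ Dp).image Prod.fst = Dm.image Prod.fst := by
    rw [image_union, ← hf, union_self]
  have himg2 : (Dm ∪ Dp).image Prod.snd = Dm.image Prod.snd := by
    rw [image_union, ← hs, union_self]
  have hone : ∀ i ∈ (Dm ∪ Dp).image Prod.fst,
      (Dm.filter fun p => p.1 = i).card = 1 ∧ (Dp.filter fun p => p.1 = i).card = 1 := by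
    intro i hi
    rw [himg] at hi
    exact ⟨filter_card_one imf hi, filter_card_one ipf (hf ▸ hi)⟩
  have hcone : ∀ j ∈ (Dm ∪ Dp).image Prod.snd,
      (Dm.filter fun p => p.2 = j).card = 1 ∧ (Dp.filter fun p => p.2 = j).card = 1 := by
    intro j hj
    rw [himg2] at hj
    exact ⟨filter_card_one ims hj, filter_card_one ips (hs ▸ hj)⟩
  refine ⟨⟨?_, ?_, ?_, ?_, ?_⟩, hone, hcone⟩
  · rw [card_union_of_disjoint hd, hm, hp, two_mul]
  · rw [himg, card_image_of_injOn imf, hm]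
  · intro i hi
    obtain ⟨e1, e2⟩ := hone i hi
    rw [filter_union, card_union_of_disjoint (disjoint_filter_filter hd), e1, e2]
  · rw [himg2, card_image_of_injOn ims, hm]
  · intro j hj
    obtain ⟨e1, e2⟩ := hcone j hj
    rw [filter_union, card_union_of_disjoint (disjoint_filter_filter hd), e1, e2]
private lemma connect {I J : ℕ} :
    ∀ (N : ℕ) (F F' : Finset (Fin I × Fin J)), (F \ F').card ≤ N →
    (∀ i, (F.filter fun p => p.1 = i).card = (F'.filter fun p => p.1 = i).card) →
    (∀ j, (F.filter fun p => p.2 = j).card = (F'.filter fun p => p.2 = j).card) →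
    ∃ (n : ℕ) (g : ℕ → Finset (Fin I × Fin J)),
      g 0 = F ∧ g n = F' ∧
      (∀ t ≤ n,
        (∀ i, ((g t).filter fun p => p.1 = i).card = (F.filter fun p => p.1 = i).card) ∧
        (∀ j, ((g t).filter fun p => p.2 = j).card = (F.filter fun p => p.2 = j).card)) ∧
      (∀ t < n, ∃ k, 2 ≤ k ∧
        IsKCycle k ((g t \ g (t + 1)) ∪ (g (t + 1) \ g t)) ∧
        (g t \ g (t + 1)).card = k ∧ (g (t + 1) \ g t).card = k ∧
        (∀ i ∈ ((g t \ g (t + 1)) ∪ (g (t + 1) \ g t)).image Prod.fst,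
          ((g t \ g (t + 1)).filter fun p => p.1 = i).card = 1 ∧
          ((g (t + 1) \ g t).filter fun p => p.1 = i).card = 1) ∧
        (∀ j ∈ ((g t \ g (t + 1)) ∪ (g (t + 1) \ g t)).image Prod.snd,
          ((g t \ g (t + 1)).filter fun p => p.2 = j).card = 1 ∧
          ((g (t + 1) \ g t).filter fun p => p.2 = j).card = 1)) := by
  classical
  intro N
  induction N with
  | zero =>
    intro F F' hcard hA hB
    -- F \ F' = ∅, hence F = F'
    have hFF' : F = F' := by
      have hsub : F ⊆ F' := sdiff_eq_empty_iff_subset.1 (card_eq_zero.1 (Nat.le_zero.1 hcard))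
      have hc1 : F.card = F'.card := by
        rw [card_eq_sum_card_fiberwise (f := Prod.fst) (t := univ) (fun x _ => mem_univ _),
          card_eq_sum_card_fiberwise (f := Prod.fst) (t := univ) (fun x _ => mem_univ _)]
        exact Finset.sum_congr rfl fun i _ => hA i
      exact eq_of_subset_of_card_le hsub (le_of_eq hc1.symm)
    subst hFF'
    exact ⟨0, fun _ => F, rfl, rfl, fun t _ => ⟨fun _ => rfl, fun _ => rfl⟩,
      fun t ht => absurd ht (Nat.not_lt_zero t)⟩
  | succ N ih =>
    intro F F' hcard hA hB
    by_cases hFF' : F \ F' = ∅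
    · have hFF : F = F' := by
        have hsub : F ⊆ F' := sdiff_eq_empty_iff_subset.1 hFF'
        have hc1 : F.card = F'.card := by
          rw [card_eq_sum_card_fiberwise (f := Prod.fst) (t := univ) (fun x _ => mem_univ _),
            card_eq_sum_card_fiberwise (f := Prod.fst) (t := univ) (fun x _ => mem_univ _)]
          exact Finset.sum_congr rfl fun i _ => hA i
        exact eq_of_subset_of_card_le hsub (le_of_eq hc1.symm)
      subst hFF
      exact ⟨0, fun _ => F, rfl, rfl, fun t _ => ⟨fun _ => rfl, fun _ => rfl⟩,
        fun t ht => absurd ht (Nat.not_lt_zero t)⟩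
    · -- margins of the symmetric difference parts agree
      have hdiffA : ∀ i, ((F \ F').filter fun p => p.1 = i).card
          = ((F' \ F).filter fun p => p.1 = i).card := by
        intro i
        have e1 : (F.filter fun p => p.1 = i).card
            = ((F ∩ F').filter fun p => p.1 = i).card + ((F \ F').filter fun p => p.1 = i).card := by
          have : F = (F ∩ F') ∪ (F \ F') := by
            rw [Finset.union_comm, Finset.sdiff_union_inter]
          nth_rewrite 1 [this]
          rw [filter_union, card_union_of_disjoint]
          exact disjoint_filter_filter (disjoint_of_subset_left inter_subset_right sdiff_disjoint.symm)
        have e2 : (F'.filter fun p => p.1 = i).card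
            = ((F ∩ F').filter fun p => p.1 = i).card + ((F' \ F).filter fun p => p.1 = i).card := by
          have : F' = (F ∩ F') ∪ (F' \ F) := by
            rw [Finset.inter_comm, Finset.union_comm, Finset.sdiff_union_inter]
          nth_rewrite 1 [this]
          rw [filter_union, card_union_of_disjoint]
          exact disjoint_filter_filter (disjoint_of_subset_left inter_subset_left sdiff_disjoint.symm)
        have := hA i
        omega
      have hdiffB : ∀ j, ((F \ F').filter fun p => p.2 = j).card
          = ((F' \ F).filter fun p => p.2 = j).card := by
        intro j
        have e1 : (F.filter fun p => p.2 = j).card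
            = ((F ∩ F').filter fun p => p.2 = j).card + ((F \ F').filter fun p => p.2 = j).card := by
          have : F = (F ∩ F') ∪ (F \ F') := by
            rw [Finset.union_comm, Finset.sdiff_union_inter]
          nth_rewrite 1 [this]
          rw [filter_union, card_union_of_disjoint]
          exact disjoint_filter_filter (disjoint_of_subset_left inter_subset_right sdiff_disjoint.symm)
        have e2 : (F'.filter fun p => p.2 = j).card
            = ((F ∩ F').filter fun p => p.2 = j).card + ((F' \ F).filter fun p => p.2 = j).card := by
          have : F' = (F ∩ F') ∪ (F' \ F) := by
            rw [Finset.inter_comm, Finset.union_comm, Finset.sdiff_union_inter]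
          nth_rewrite 1 [this]
          rw [filter_union, card_union_of_disjoint]
          exact disjoint_filter_filter (disjoint_of_subset_left inter_subset_left sdiff_disjoint.symm)
        have := hB j
        omega
      obtain ⟨k, Dm, Dp, hk2, hDmA, hDpB, hkm, hkp, hfimg, hsimg, imf, ipf, ims, ips⟩ :=
        extract_cycle (F \ F') (F' \ F) disjoint_sdiff_sdiff
          (nonempty_iff_ne_empty.2 hFF') hdiffA hdiffB
      set F₁ : Finset (Fin I × Fin J) := (F \ Dm) ∪ Dp with hF₁
      have hDmF : Dm ⊆ F := hDmA.trans sdiff_subset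
      have hDpF' : Dp ⊆ F' := hDpB.trans sdiff_subset
      have hDpnF : Disjoint Dp F := by
        rw [disjoint_left]
        intro x hx hxF
        exact (mem_sdiff.1 (hDpB hx)).2 hxF
      have hdmp : Disjoint Dm Dp :=
        disjoint_of_subset_left hDmA (disjoint_of_subset_right hDpB disjoint_sdiff_sdiff)
      -- margins of F₁ equal margins of F
      have hF₁A : ∀ i, (F₁.filter fun p => p.1 = i).card = (F.filter fun p => p.1 = i).card := by
        intro i
        exact card_filter_step hDmF hDpnF _ (filter_card_eq' imf ipf hfimg i)
      have hF₁B : ∀ j, (F₁.filter fun p => p.2 = j).card = (F.filter fun p => p.2 = j).card := by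
        intro j
        exact card_filter_step hDmF hDpnF _ (filter_card_eq' ims ips hsimg j)
      -- the symmetric difference with F' shrinks
      have hF₁diff : F₁ \ F' = (F \ F') \ Dm := by
        ext x
        simp only [hF₁, mem_sdiff, mem_union]
        constructor
        · rintro ⟨⟨h1, h2⟩ | h3, h4⟩
          · exact ⟨⟨h1, h4⟩, h2⟩
          · exact absurd (hDpF' h3) h4
        · rintro ⟨⟨h1, h2⟩, h3⟩
          exact ⟨Or.inl ⟨h1, h3⟩, h2⟩
      have hF₁card : (F₁ \ F').card ≤ N := by
        rw [hF₁diff, card_sdiff_of_subset hDmA, hkm]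
        omega
      obtain ⟨n₁, g₁, hg0, hgn, hmarg, hstep⟩ := ih F₁ F' hF₁card
        (fun i => (hF₁A i).trans (hA i)) (fun j => (hF₁B j).trans (hB j))
      refine ⟨n₁ + 1, fun t => if t = 0 then F else g₁ (t - 1), by simp, by simp [hgn], ?_, ?_⟩
      · intro t ht
        by_cases ht0 : t = 0
        · simp [ht0]
        · simp only [if_neg ht0]
          obtain ⟨m1, m2⟩ := hmarg (t - 1) (by omega)
          exact ⟨fun i => (m1 i).trans (hF₁A i), fun j => (m2 j).trans (hF₁B j)⟩
      · intro t ht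
        by_cases ht0 : t = 0
        · subst ht0
          have hd1 : F \ F₁ = Dm := by
            ext x
            simp only [hF₁, mem_sdiff, mem_union]
            constructor
            · rintro ⟨hxF, hx⟩
              by_contra hxm
              exact hx (Or.inl ⟨hxF, hxm⟩)
            · intro hxm
              refine ⟨hDmF hxm, ?_⟩
              rintro (⟨-, h⟩ | h)
              · exact h hxm
              · exact disjoint_left.mp hdmp hxm h
          have hd2 : F₁ \ F = Dp := by
            ext x
            simp only [hF₁, mem_sdiff, mem_union]
            constructor
            · rintro ⟨⟨h1, -⟩ | h3, h4⟩
              · exact absurd h1 h4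
              · exact h3
            · intro hx
              exact ⟨Or.inr hx, disjoint_left.mp hDpnF hx⟩
          obtain ⟨hcyc, hrows, hcols⟩ := cycle_of_parts hdmp hkm hkp hfimg hsimg imf ipf ims ips
          simp only [Nat.reduceAdd, reduceIte, if_neg (one_ne_zero), Nat.add_sub_cancel, hg0]
          rw [hd1, hd2]
          exact ⟨k, hk2, hcyc, hkm, hkp, hrows, hcols⟩
        · have h1 : t - 1 < n₁ := by omega
          have e2 : t + 1 - 1 = t - 1 + 1 := by omega
          simp only [if_neg ht0, if_neg (Nat.succ_ne_zero t), e2]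
          exact hstep (t - 1) h1

end MarkovBasisAux

/-- The `k`-cycle moves form a Markov basis for binary `I × J` tables: any two finsets
of `Fin I × Fin J` with the same row and column margins are connected by a finite
sequence of finsets, each with the same margins, in which each step adds and removes
the two parts of cardinality `k` of a `k`-cycle (each part containing every occurring
row level as first coordinate exactly once and every occurring column level as second
coordinate exactly once). -/
theorem markov_basis_connects_same_margins {I J : ℕ} (hI : 2 ≤ I) (hJ : 2 ≤ J)
    (F F' : Finset (Fin I × Fin J))
    (hA : ∀ i, (F.filter fun p => p.1 = i).card = (F'.filter fun p => p.1 = i).card)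
    (hB : ∀ j, (F.filter fun p => p.2 = j).card = (F'.filter fun p => p.2 = j).card) :
    ∃ (n : ℕ) (g : ℕ → Finset (Fin I × Fin J)),
      g 0 = F ∧ g n = F' ∧
      (∀ t ≤ n,
        (∀ i, ((g t).filter fun p => p.1 = i).card = (F.filter fun p => p.1 = i).card) ∧
        (∀ j, ((g t).filter fun p => p.2 = j).card = (F.filter fun p => p.2 = j).card)) ∧
      (∀ t < n, ∃ k, 2 ≤ k ∧
        IsKCycle k ((g t \ g (t + 1)) ∪ (g (t + 1) \ g t)) ∧
        (g t \ g (t + 1)).card = k ∧ (g (t + 1) \ g t).card = k ∧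
        (∀ i ∈ ((g t \ g (t + 1)) ∪ (g (t + 1) \ g t)).image Prod.fst,
          ((g t \ g (t + 1)).filter fun p => p.1 = i).card = 1 ∧
          ((g (t + 1) \ g t).filter fun p => p.1 = i).card = 1) ∧
        (∀ j ∈ ((g t \ g (t + 1)) ∪ (g (t + 1) \ g t)).image Prod.snd,
          ((g t \ g (t + 1)).filter fun p => p.2 = j).card = 1 ∧
          ((g (t + 1) \ g t).filter fun p => p.2 = j).card = 1)) := by
  classical
  obtain ⟨n, g, h0, hn, hmarg, hstep⟩ := connect (F \ F').card F F' le_rfl hA hB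
  exact ⟨n, g, h0, hn, hmarg, hstep⟩
end

section
/- Let I, J ≥ 2 and let C be a k-cycle in Fin I × Fin J, partitioned into its two parts C₁ and C₂ (disjoint finsets with C₁ ∪ C₂ = C, card C₁ = card C₂ = k, each containing every row level occurring in C as first coordinate exactly once and every column level occurring in C as second coordinate exactly once). Then the signed sum of model rows ∑_{p ∈ C₁} r(p) − ∑_{p ∈ C₂} r(p) equals the zero vector of ℝ^{1+(I−1)+(J−1)}. -/
open Finset

theorem Finset.sum_comp_eq_sum_of_card_fiber_eq_one {α β M : Type*} [DecidableEq β]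
    [AddCommMonoid M] {s : Finset α} {t : Finset β} {f : α → β} (g : β → M)
    (hmaps : ∀ x ∈ s, f x ∈ t) (hfiber : ∀ b ∈ t, (s.filter fun x => f x = b).card = 1) :
    ∑ x ∈ s, g (f x) = ∑ b ∈ t, g b := by
  rw [← sum_fiberwise_of_maps_to hmaps]
  refine sum_congr rfl fun b hb => ?_
  rw [sum_congr rfl fun x hx => congrArg g (mem_filter.mp hx).2, sum_const, hfiber b hb, one_smul]

section ModelRow

variable {I J : ℕ}

def rowEffect (i : Fin I) : ℝ × (Fin (I - 1) → ℝ) × (Fin (J - 1) → ℝ) :=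
  (0, fun a => if (i : ℕ) = (a : ℕ) then 1 else 0, 0)

def colEffect (j : Fin J) : ℝ × (Fin (I - 1) → ℝ) × (Fin (J - 1) → ℝ) :=
  (0, 0, fun b => if (j : ℕ) = (b : ℕ) then 1 else 0)

theorem modelRow_eq_add (p : Fin I × Fin J) :
    modelRow p = (1, 0, 0) + rowEffect p.1 + colEffect p.2 := by
  ext <;> simp [modelRow, rowEffect, colEffect]

theorem sum_modelRow_of_transversal {C S : Finset (Fin I × Fin J)} (hS : S ⊆ C)
    (hrow : ∀ i ∈ C.image Prod.fst, (S.filter fun p => p.1 = i).card = 1)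
    (hcol : ∀ j ∈ C.image Prod.snd, (S.filter fun p => p.2 = j).card = 1) :
    ∑ p ∈ S, modelRow p = S.card • ((1, 0, 0) : ℝ × (Fin (I - 1) → ℝ) × (Fin (J - 1) → ℝ)) +
      ∑ i ∈ C.image Prod.fst, rowEffect i + ∑ j ∈ C.image Prod.snd, colEffect j := by
  simp only [modelRow_eq_add, sum_add_distrib, sum_const]
  rw [sum_comp_eq_sum_of_card_fiber_eq_one rowEffect
      (fun p hp => mem_image_of_mem _ (hS hp)) hrow,
    sum_comp_eq_sum_of_card_fiber_eq_one colEffect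
      (fun p hp => mem_image_of_mem _ (hS hp)) hcol]

end ModelRow

theorem signed_sum_modelRows_eq_zero_general {I J k : ℕ}
    (C C₁ C₂ : Finset (Fin I × Fin J))
    (hunion : C₁ ∪ C₂ = C)
    (h1 : C₁.card = k) (h2 : C₂.card = k)
    (row1 : ∀ i ∈ C.image Prod.fst, (C₁.filter fun p => p.1 = i).card = 1)
    (col1 : ∀ j ∈ C.image Prod.snd, (C₁.filter fun p => p.2 = j).card = 1)
    (row2 : ∀ i ∈ C.image Prod.fst, (C₂.filter fun p => p.1 = i).card = 1)
    (col2 : ∀ j ∈ C.image Prod.snd, (C₂.filter fun p => p.2 = j).card = 1) :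
    (∑ p ∈ C₁, modelRow p) - (∑ p ∈ C₂, modelRow p) = 0 := by
  rw [sub_eq_zero,
    sum_modelRow_of_transversal (hunion ▸ subset_union_left) row1 col1,
    sum_modelRow_of_transversal (hunion ▸ subset_union_right) row2 col2, h1, h2]

/-- For a `k`-cycle `C` partitioned into its two orthogonal-array parts `C₁` and `C₂`,
the signed sum of model rows `∑_{p ∈ C₁} r(p) − ∑_{p ∈ C₂} r(p)` is the zero vector. -/
theorem signed_sum_modelRows_eq_zero {I J k : ℕ} (hI : 2 ≤ I) (hJ : 2 ≤ J) (hk : 2 ≤ k)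
    (C C₁ C₂ : Finset (Fin I × Fin J)) (hC : IsKCycle k C)
    (hdisj : Disjoint C₁ C₂) (hunion : C₁ ∪ C₂ = C)
    (h1 : C₁.card = k) (h2 : C₂.card = k)
    (row1 : ∀ i ∈ C.image Prod.fst, (C₁.filter fun p => p.1 = i).card = 1)
    (col1 : ∀ j ∈ C.image Prod.snd, (C₁.filter fun p => p.2 = j).card = 1)
    (row2 : ∀ i ∈ C.image Prod.fst, (C₂.filter fun p => p.1 = i).card = 1)
    (col2 : ∀ j ∈ C.image Prod.snd, (C₂.filter fun p => p.2 = j).card = 1) :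
    (∑ p ∈ C₁, modelRow p) - (∑ p ∈ C₂, modelRow p) = 0 :=
  signed_sum_modelRows_eq_zero_general C C₁ C₂ hunion h1 h2 row1 col1 row2 col2
end
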